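/- arXiv:math/0510622 — 8 statements merged into one kernel-verified Lean document; each statement's English description precedes it below -/
import Mathlib

section
/- Let φ : S → T be a surjective semigroup homomorphism between semigroups with zero such that φ(0_S) = 0_T. If T is a nilpotent semigroup of nilpotency class n, and the subsemigroup φ⁻¹(0_T) of S is a nilpotent semigroup of nilpotency class m, then S is a nilpotent semigroup of nilpotency class at most m·n. -/
namespace NilSg

variable {M : Type*}

/-- `T ⊆ M` is closed under multiplication. -/
def IsSubsg [Mul M] (T : Set M) : Prop :=
  ∀ ⦃a⦄, a ∈ T → ∀ ⦃b⦄, b ∈ T → a * b ∈ T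

/-- Every product of exactly `k` elements of `T` equals `z`
(such products are the products of nonempty lists `a :: l` of elements of `T`). -/
def ProdEq [Mul M] (z : M) (T : Set M) (k : ℕ) : Prop :=
  ∀ (a : M) (l : List M), a ∈ T → (∀ x ∈ l, x ∈ T) → l.length + 1 = k →
    l.foldl (· * ·) a = z

/-- `T` is a nilpotent subsemigroup with respect to the zero element `z`. -/
def IsNilSubsg [Mul M] (z : M) (T : Set M) : Prop :=
  IsSubsg T ∧ ∃ k, 0 < k ∧ ProdEq z T k

/-- The nilpotency class of `T`: the minimal `k ≥ 1` such that every product of `k`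
elements of `T` equals `z`. -/
noncomputable def nilClass [Mul M] (z : M) (T : Set M) : ℕ :=
  sInf {k | 0 < k ∧ ProdEq z T k}

/-- `T` is a nilpotent subsemigroup of `S` (with zero `z`). -/
def NilIn [Mul M] (z : M) (S : Set M) (T : Set M) : Prop :=
  T ⊆ S ∧ IsNilSubsg z T

/-- `T` is a nilpotent subsemigroup of `S` (with zero `z`) of nilpotency class at most `k`. -/
def NilLe [Mul M] (z : M) (S : Set M) (k : ℕ) (T : Set M) : Prop :=
  T ⊆ S ∧ IsNilSubsg z T ∧ nilClass z T ≤ k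

/-- If `φ : S → T` is a surjective homomorphism of semigroups with zero
with `φ 0 = 0`, `T` is nilpotent of class `n`, and the subsemigroup `φ⁻¹(0)` of `S`
is nilpotent of class `m`, then `S` is nilpotent of class at most `m * n`. -/
theorem stmt0 {S T : Type*} [SemigroupWithZero S] [SemigroupWithZero T]
    (φ : S →ₙ* T) (hsurj : Function.Surjective φ) (hzero : φ 0 = 0) (n m : ℕ)
    (hTnil : IsNilSubsg (0 : T) (Set.univ : Set T))
    (hTn : nilClass (0 : T) (Set.univ : Set T) = n)
    (hPnil : IsNilSubsg (0 : S) (φ ⁻¹' {0}))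
    (hPm : nilClass (0 : S) (φ ⁻¹' {0}) = m) :
    IsNilSubsg (0 : S) (Set.univ : Set S) ∧
      nilClass (0 : S) (Set.univ : Set S) ≤ m * n := by
  classical
  -- extract the nilpotency facts for T
  have hTne : {k | 0 < k ∧ ProdEq (0 : T) (Set.univ : Set T) k}.Nonempty := hTnil.2
  have hTmem := Nat.sInf_mem hTne
  rw [show sInf {k | 0 < k ∧ ProdEq (0 : T) (Set.univ : Set T) k} =
      nilClass (0 : T) (Set.univ : Set T) from rfl, hTn] at hTmem
  obtain ⟨hnpos, hTprod⟩ := hTmem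
  have hPne : {k | 0 < k ∧ ProdEq (0 : S) (φ ⁻¹' {0}) k}.Nonempty := hPnil.2
  have hPmem := Nat.sInf_mem hPne
  rw [show sInf {k | 0 < k ∧ ProdEq (0 : S) (φ ⁻¹' {0}) k} =
      nilClass (0 : S) (φ ⁻¹' {0}) from rfl, hPm] at hPmem
  obtain ⟨hmpos, hPprod⟩ := hPmem
  -- folding commutes with φ
  have hfold : ∀ (l : List S) (a : S),
      φ (l.foldl (· * ·) a) = (l.map φ).foldl (· * ·) (φ a) := by
    intro l
    induction l with
    | nil => intro a; rfl
    | cons x t ih => intro a; simp only [List.foldl_cons, List.map_cons, ih, map_mul]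
  -- foldl of mul pulls out the left factor
  have hassoc : ∀ (l : List S) (a b : S),
      l.foldl (· * ·) (a * b) = a * l.foldl (· * ·) b := by
    intro l
    induction l with
    | nil => intro a b; rfl
    | cons x t ih => intro a b; simp only [List.foldl_cons, mul_assoc, ih]
  -- a product of exactly n elements lands in the kernel
  have hblock : ∀ (a : S) (l : List S), l.length + 1 = n → φ (l.foldl (· * ·) a) = 0 := by
    intro a l hl
    rw [hfold]
    exact hTprod (φ a) (l.map φ) (Set.mem_univ _) (fun x _ => Set.mem_univ _)
      (by simpa using hl)
  -- main chunking lemma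
  have R : ∀ (j : ℕ) (c : S) (l : List S), l.length = j * n →
      ∃ l' : List S, (∀ x ∈ l', φ x = 0) ∧ l'.length = j ∧
        l.foldl (· * ·) c = l'.foldl (· * ·) c := by
    intro j
    induction j with
    | zero =>
      intro c l hl
      simp only [Nat.zero_mul, List.length_eq_zero_iff] at hl
      exact ⟨[], by simp, rfl, by rw [hl]⟩
    | succ j ih =>
      intro c l hl
      have hlen : l.length = j * n + n := by rw [hl]; ring
      obtain ⟨x, t, rfl⟩ : ∃ x t, l = x :: t := by
        cases l with
        | nil => exfalso; simp at hlen; omega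
        | cons x t => exact ⟨x, t, rfl⟩
      have htlen : t.length = j * n + (n - 1) := by
        simp only [List.length_cons] at hlen; omega
      set t₁ := t.take (n - 1) with ht₁
      set t₂ := t.drop (n - 1) with ht₂
      have ht₁len : t₁.length = n - 1 := by
        rw [ht₁, List.length_take]; omega
      have ht₂len : t₂.length = j * n := by
        rw [ht₂, List.length_drop]; omega
      set e := t₁.foldl (· * ·) x with he
      have heker : φ e = 0 := hblock x t₁ (by omega)
      have hsplit : (x :: t).foldl (· * ·) c = t₂.foldl (· * ·) (c * e) := by
        have : t = t₁ ++ t₂ := (List.take_append_drop (n - 1) t).symm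
        rw [List.foldl_cons]
        conv_lhs => rw [this]
        rw [List.foldl_append, he, hassoc]
      obtain ⟨l'', hmem'', hlen'', heq''⟩ := ih (c * e) t₂ ht₂len
      refine ⟨e :: l'', ?_, by simp [hlen''], ?_⟩
      · intro y hy
        rcases List.mem_cons.mp hy with h | h
        · rw [h]; exact heker
        · exact hmem'' y h
      · rw [hsplit, heq'', List.foldl_cons]
  -- the product of m*n elements of S vanishes
  have hmain : ProdEq (0 : S) (Set.univ : Set S) (m * n) := by
    intro a l _ _ hl
    set t₁ := l.take (n - 1) with ht₁
    set t₂ := l.drop (n - 1) with ht₂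
    have hllen : l.length = m * n - 1 := by omega
    have hge : n - 1 ≤ l.length := by
      have : n ≤ m * n := Nat.le_mul_of_pos_left n hmpos
      omega
    have ht₁len : t₁.length = n - 1 := by rw [ht₁, List.length_take]; omega
    have ht₂len : t₂.length = (m - 1) * n := by
      rw [ht₂, List.length_drop]
      have : m * n = (m - 1) * n + n := by
        cases m with
        | zero => omega
        | succ k => simp [Nat.succ_mul]
      omega
    set e := t₁.foldl (· * ·) a with he
    have heker : φ e = 0 := hblock a t₁ (by omega)
    have hsplit : l.foldl (· * ·) a = t₂.foldl (· * ·) e := by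
      conv_lhs => rw [(List.take_append_drop (n - 1) l).symm]
      rw [List.foldl_append, he]
    obtain ⟨l', hmem', hlen', heq'⟩ := R (m - 1) e t₂ ht₂len
    rw [hsplit, heq']
    refine hPprod e l' ?_ ?_ (by omega)
    · simpa using heker
    · intro x hx; simpa using hmem' x hx
  have hpos : 0 < m * n := Nat.mul_pos hmpos hnpos
  constructor
  · exact ⟨fun a _ b _ => Set.mem_univ _, m * n, hpos, hmain⟩
  · exact Nat.sInf_le ⟨hpos, hmain⟩


end NilSg
end

section
/- Let φ : S → T be a surjective semigroup homomorphism between semigroups with zero such that φ(0_S) = 0_T, and assume Nil^max(S) ≠ ∅. Then the map A ↦ φ⁻¹(A) is a bijection from Nil^max(T) onto Nil^max(S) if and only if φ⁻¹(0_T) is a nilpotent subsemigroup of S. -/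
namespace NilSg

variable {M : Type*}

/-! ### Auxiliary lemmas -/

lemma foldl_cons_mul [Semigroup M] (l : List M) :
    ∀ (x y : M), (y :: l).foldl (· * ·) x = x * l.foldl (· * ·) y := by
  induction l with
  | nil => intro x y; simp
  | cons z zs ih =>
      intro x y
      have h1 : (y :: z :: zs).foldl (· * ·) x = (z :: zs).foldl (· * ·) (x * y) := rfl
      rw [h1, ih (x * y) z, ih y z, mul_assoc]

lemma prodEq_mono [Mul M] {z : M} {T T' : Set M} (h : T' ⊆ T) {k : ℕ}
    (hp : ProdEq z T k) : ProdEq z T' k :=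
  fun a l ha hl hlen => hp a l (h ha) (fun x hx => h (hl x hx)) hlen

lemma foldl_mem [Mul M] {T : Set M} (hT : IsSubsg T) :
    ∀ (l : List M) (a : M), a ∈ T → (∀ x ∈ l, x ∈ T) → l.foldl (· * ·) a ∈ T := by
  intro l
  induction l with
  | nil => intro a ha _; exact ha
  | cons b t ih =>
      intro a ha hl
      exact ih (a * b) (hT ha (hl b (by simp))) (fun x hx => hl x (by simp [hx]))

lemma foldl_map_hom {S T : Type*} [Mul S] [Mul T] (φ : S →ₙ* T) (l : List S) :
    ∀ (a : S), φ (l.foldl (· * ·) a) = (l.map φ).foldl (· * ·) (φ a) := by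
  induction l with
  | nil => intro a; rfl
  | cons b t ih =>
      intro a
      simp only [List.foldl_cons, List.map_cons]
      rw [ih (a * b), map_mul]

lemma foldl_zero_left [SemigroupWithZero M] (l : List M) :
    l.foldl (· * ·) (0 : M) = 0 := by
  induction l with
  | nil => rfl
  | cons b t ih => simpa using ih

lemma foldl_zero_mem [SemigroupWithZero M] (a : M) (l : List M) (h : (0 : M) ∈ l) :
    l.foldl (· * ·) a = 0 := by
  obtain ⟨s, t, rfl⟩ := List.append_of_mem h
  rw [List.foldl_append, List.foldl_cons, mul_zero, foldl_zero_left]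

lemma insert_zero_nil [SemigroupWithZero M] {X : Set M} (h : IsNilSubsg 0 X) :
    IsNilSubsg 0 (insert (0 : M) X) := by
  obtain ⟨hsub, k, hk, hp⟩ := h
  refine ⟨?_, k, hk, ?_⟩
  · intro a ha b hb
    rcases ha with rfl | ha
    · simp
    rcases hb with rfl | hb
    · simp
    · exact Or.inr (hsub ha hb)
  · intro a l ha hl hlen
    rcases ha with rfl | ha
    · exact foldl_zero_left l
    by_cases h0 : (0 : M) ∈ l
    · exact foldl_zero_mem a l h0
    · refine hp a l ha (fun x hx => ?_) hlen
      rcases hl x hx with rfl | hx'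
      · exact absurd hx h0
      · exact hx'

lemma zero_mem_of_maximal [SemigroupWithZero M] {A : Set M}
    (hA : Maximal (IsNilSubsg (0 : M)) A) : (0 : M) ∈ A :=
  hA.2 (insert_zero_nil hA.1) (Set.subset_insert _ _) (Set.mem_insert _ _)

/-- The preimage of a nilpotent subsemigroup containing `0` is nilpotent,
provided `φ ⁻¹' {0}` is nilpotent. -/
lemma nil_preimage {S T : Type*} [SemigroupWithZero S] [SemigroupWithZero T]
    (φ : S →ₙ* T) (hK : IsNilSubsg (0 : S) (φ ⁻¹' {0})) {A : Set T}
    (hA : IsNilSubsg (0 : T) A) (h0A : (0 : T) ∈ A) :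
    IsNilSubsg (0 : S) (φ ⁻¹' A) := by
  obtain ⟨hKsub, m, hm, hPK⟩ := hK
  obtain ⟨hAsub, k, hk, hPA⟩ := hA
  set K : Set S := φ ⁻¹' {0} with hKdef
  set B : Set S := φ ⁻¹' A with hBdef
  have hBsub : IsSubsg B := by
    intro a ha b hb
    simp only [hBdef, Set.mem_preimage, map_mul]
    exact hAsub ha hb
  -- every product of exactly `k` elements of `B` lies in `K`
  have hBK : ∀ b ∈ B, ∀ bs : List S, (∀ x ∈ bs, x ∈ B) → bs.length + 1 = k →
      bs.foldl (· * ·) b ∈ K := by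
    intro b hb bs hbs hlen
    have : φ (bs.foldl (· * ·) b) = 0 := by
      rw [foldl_map_hom]
      exact hPA (φ b) (bs.map φ) hb
        (by
          intro x hx
          obtain ⟨y, hy, rfl⟩ := List.mem_map.mp hx
          exact hbs y hy)
        (by simpa using hlen)
    simpa [hKdef] using this
  -- the key chunking claim
  have E : ∀ (j : ℕ) (x : S), x ∈ K → ∀ l : List S, (∀ y ∈ l, y ∈ B) →
      l.length = k * j → ∃ l' : List S, (∀ y ∈ l', y ∈ K) ∧ l'.length = j ∧
        l.foldl (· * ·) x = l'.foldl (· * ·) x := by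
    intro j
    induction j with
    | zero =>
        intro x hx l hl hlen
        have : l = [] := List.eq_nil_of_length_eq_zero (by simpa using hlen)
        exact ⟨[], by simp, rfl, by simp [this]⟩
    | succ j ih =>
        intro x hx l hl hlen
        have hlk : l.length = k + k * j := by rw [hlen]; ring
        obtain ⟨b, t, rfl⟩ : ∃ b t, l = b :: t := by
          cases l with
          | nil => exfalso; simp at hlk; omega
          | cons b t => exact ⟨b, t, rfl⟩
        have htlen : t.length = (k - 1) + k * j := by
          simp at hlk; omega
        set bs := t.take (k - 1) with hbs
        set rest := t.drop (k - 1) with hrest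
        have hbs_len : bs.length = k - 1 := by
          simp [hbs]; omega
        have hrest_len : rest.length = k * j := by
          simp [hrest]; omega
        have ht : t = bs ++ rest := (List.take_append_drop _ _).symm
        have hbmem : b ∈ B := hl b (by simp)
        have hbsmem : ∀ x ∈ bs, x ∈ B := fun x hx =>
          hl x (by simp [ht]; exact Or.inr (Or.inl (by simpa [hbs] using hx)))
        have hrestmem : ∀ x ∈ rest, x ∈ B := fun x hx =>
          hl x (by simp [ht]; exact Or.inr (Or.inr (by simpa [hrest] using hx)))
        set p := bs.foldl (· * ·) b with hp
        have hpK : p ∈ K := hBK b hbmem bs hbsmem (by omega)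
        have hxpK : x * p ∈ K := hKsub hx hpK
        obtain ⟨l'', hl''K, hl''len, hl''eq⟩ := ih (x * p) hxpK rest hrestmem hrest_len
        refine ⟨p :: l'', ?_, by simp [hl''len], ?_⟩
        · intro y hy
          rcases List.mem_cons.mp hy with rfl | hy
          · exact hpK
          · exact hl''K y hy
        · calc (b :: t).foldl (· * ·) x
              = ((b :: bs) ++ rest).foldl (· * ·) x := by rw [ht]; rfl
            _ = rest.foldl (· * ·) ((b :: bs).foldl (· * ·) x) := List.foldl_append ..
            _ = rest.foldl (· * ·) (x * p) := by rw [foldl_cons_mul]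
            _ = l''.foldl (· * ·) (x * p) := hl''eq
            _ = (p :: l'').foldl (· * ·) x := rfl
  refine ⟨hBsub, k * m, Nat.mul_pos hk hm, ?_⟩
  intro a l ha hl hlen
  have hllen : l.length = (k - 1) + k * (m - 1) := by
    have : k * m = k + k * (m - 1) := by
      cases m with
      | zero => omega
      | succ m' => rw [Nat.succ_sub_one]; ring
    omega
  set bs := l.take (k - 1) with hbs
  set rest := l.drop (k - 1) with hrest
  have hbs_len : bs.length = k - 1 := by simp [hbs]; omega
  have hrest_len : rest.length = k * (m - 1) := by simp [hrest]; omega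
  have hlsplit : l = bs ++ rest := (List.take_append_drop _ _).symm
  have hbsmem : ∀ x ∈ bs, x ∈ B := fun x hx => hl x (by
    rw [hlsplit]; exact List.mem_append.mpr (Or.inl hx))
  have hrestmem : ∀ x ∈ rest, x ∈ B := fun x hx => hl x (by
    rw [hlsplit]; exact List.mem_append.mpr (Or.inr hx))
  set x := bs.foldl (· * ·) a with hx
  have hxK : x ∈ K := hBK a ha bs hbsmem (by omega)
  obtain ⟨l', hl'K, hl'len, hl'eq⟩ := E (m - 1) x hxK rest hrestmem hrest_len
  calc l.foldl (· * ·) a = rest.foldl (· * ·) x := by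
        rw [hlsplit, List.foldl_append]
    _ = l'.foldl (· * ·) x := hl'eq
    _ = 0 := hPK x l' hxK hl'K (by omega)

/-- preimage lists for images -/
lemma exists_preimage_list {S T : Type*} (φ : S → T) (B : Set S) :
    ∀ l : List T, (∀ x ∈ l, x ∈ φ '' B) →
      ∃ l₀ : List S, (∀ y ∈ l₀, y ∈ B) ∧ l₀.map φ = l := by
  intro l
  induction l with
  | nil => intro _; exact ⟨[], by simp, rfl⟩
  | cons a t ih =>
      intro hl
      obtain ⟨l₀, hl₀, hmap⟩ := ih (fun x hx => hl x (by simp [hx]))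
      obtain ⟨a₀, ha₀, rfl⟩ := hl a (by simp)
      refine ⟨a₀ :: l₀, ?_, by simp [hmap]⟩
      intro y hy
      rcases List.mem_cons.mp hy with rfl | hy
      · exact ha₀
      · exact hl₀ y hy

lemma nil_image {S T : Type*} [SemigroupWithZero S] [SemigroupWithZero T]
    (φ : S →ₙ* T) (hzero : φ 0 = 0) {B : Set S} (hB : IsNilSubsg (0 : S) B) :
    IsNilSubsg (0 : T) (φ '' B) := by
  obtain ⟨hsub, k, hk, hp⟩ := hB
  refine ⟨?_, k, hk, ?_⟩
  · rintro _ ⟨a, ha, rfl⟩ _ ⟨b, hb, rfl⟩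
    exact ⟨a * b, hsub ha hb, map_mul φ a b⟩
  · intro a l ha hl hlen
    obtain ⟨l₀, hl₀, rfl⟩ := exists_preimage_list φ B l hl
    obtain ⟨a₀, ha₀, rfl⟩ := ha
    rw [← foldl_map_hom, hp a₀ l₀ ha₀ hl₀ (by simpa using hlen), hzero]

/-- For a surjective homomorphism `φ : S → T` of semigroups with zero
with `φ 0 = 0` and `Nil^max(S) ≠ ∅`, the map `A ↦ φ⁻¹(A)` is a bijection from
`Nil^max(T)` onto `Nil^max(S)` iff `φ⁻¹(0)` is a nilpotent subsemigroup of `S`. -/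
theorem stmt1 {S T : Type*} [SemigroupWithZero S] [SemigroupWithZero T]
    (φ : S →ₙ* T) (hsurj : Function.Surjective φ) (hzero : φ 0 = 0)
    (hmax : ∃ U : Set S, Maximal (IsNilSubsg (0 : S)) U) :
    Set.BijOn (fun A : Set T => φ ⁻¹' A)
        {A | Maximal (IsNilSubsg (0 : T)) A} {B | Maximal (IsNilSubsg (0 : S)) B} ↔
      IsNilSubsg (0 : S) (φ ⁻¹' {0}) := by
  have hKsub : IsSubsg (φ ⁻¹' ({0} : Set T)) := by
    intro a ha b hb
    simp only [Set.mem_preimage, Set.mem_singleton_iff, map_mul] at *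
    rw [ha, hb, zero_mul]
  constructor
  · intro h
    obtain ⟨U, hU⟩ := hmax
    obtain ⟨A, hA, hAU⟩ := h.2.2 hU
    simp only [Set.mem_setOf_eq] at hA
    have h0A : (0 : T) ∈ A := zero_mem_of_maximal hA
    have hKU : φ ⁻¹' ({0} : Set T) ⊆ U := by
      rw [← hAU]
      exact Set.preimage_mono (by simpa using h0A)
    obtain ⟨_, k, hk, hp⟩ := hU.1
    exact ⟨hKsub, k, hk, prodEq_mono hKU hp⟩
  · intro hK
    have hKnil : IsNilSubsg (0 : S) (φ ⁻¹' {0}) := hK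
    refine ⟨?_, ?_, ?_⟩
    · -- MapsTo
      intro A hA
      simp only [Set.mem_setOf_eq] at hA ⊢
      have h0A : (0 : T) ∈ A := zero_mem_of_maximal hA
      refine ⟨nil_preimage φ hKnil hA.1 h0A, ?_⟩
      intro B' hB' hsubB'
      have himg : IsNilSubsg (0 : T) (φ '' B') := nil_image φ hzero hB'
      have hAimg : A ⊆ φ '' B' := by
        rw [← Set.image_preimage_eq A hsurj]
        exact Set.image_mono hsubB'
      have : φ '' B' ⊆ A := hA.2 himg hAimg
      calc B' ⊆ φ ⁻¹' (φ '' B') := Set.subset_preimage_image φ B'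
        _ ⊆ φ ⁻¹' A := Set.preimage_mono this
    · -- InjOn
      exact (Set.preimage_injective.mpr hsurj).injOn
    · -- SurjOn
      intro B hB
      simp only [Set.mem_setOf_eq] at hB
      set A := φ '' B with hAdef
      have hAnil : IsNilSubsg (0 : T) A := nil_image φ hzero hB.1
      have hAmax : Maximal (IsNilSubsg (0 : T)) A := by
        refine ⟨hAnil, ?_⟩
        intro A' hA' hAA'
        set A'' := insert (0 : T) A' with hA''def
        have hA''nil : IsNilSubsg (0 : T) A'' := insert_zero_nil hA'
        have h0A'' : (0 : T) ∈ A'' := Set.mem_insert _ _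
        have hpre : IsNilSubsg (0 : S) (φ ⁻¹' A'') := nil_preimage φ hKnil hA''nil h0A''
        have hBpre : B ⊆ φ ⁻¹' A'' := by
          calc B ⊆ φ ⁻¹' (φ '' B) := Set.subset_preimage_image φ B
            _ ⊆ φ ⁻¹' A' := Set.preimage_mono hAA'
            _ ⊆ φ ⁻¹' A'' := Set.preimage_mono (Set.subset_insert _ _)
        have : φ ⁻¹' A'' ⊆ B := hB.2 hpre hBpre
        calc A' ⊆ A'' := Set.subset_insert _ _
          _ = φ '' (φ ⁻¹' A'') := (Set.image_preimage_eq A'' hsurj).symm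
          _ ⊆ φ '' B := Set.image_mono this
      refine ⟨A, hAmax, ?_⟩
      have h0A : (0 : T) ∈ A := zero_mem_of_maximal hAmax
      have hpre : IsNilSubsg (0 : S) (φ ⁻¹' A) := nil_preimage φ hKnil hAnil h0A
      have hBA : B ⊆ φ ⁻¹' A := Set.subset_preimage_image φ B
      exact Set.Subset.antisymm (hB.2 hpre hBA) hBA

end NilSg
end

section
/- Let φ : S → T be a surjective semigroup homomorphism between semigroups with zero such that φ⁻¹(0_T) = {0_S}, and assume Nil^max(S) ≠ ∅. Then: (i) for every nilpotent subsemigroup U of S, the subsemigroups U and φ(U) have the same nilpotency class; (ii) for every nilpotent subsemigroup V of T, the subsemigroups V and φ⁻¹(V) have the same nilpotency class; (iii) for every k ∈ ℕ, the maps U ↦ φ(U) and A ↦ φ⁻¹(A) are mutually inverse bijections between Nil_k^max(S) and Nil_k^max(T). -/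
namespace NilSg

variable {M : Type*}

section Aux

lemma foldl_map_mulHom {S T : Type*} [Mul S] [Mul T] (φ : S →ₙ* T) :
    ∀ (l : List S) (a : S), (l.map φ).foldl (· * ·) (φ a) = φ (l.foldl (· * ·) a)
  | [], _ => rfl
  | x :: l, a => by
      simp only [List.map_cons, List.foldl_cons, ← map_mul]
      exact foldl_map_mulHom φ l (a * x)

lemma list_lift {S T : Type*} (f : S → T) (W : Set S) :
    ∀ l : List T, (∀ x ∈ l, ∃ y ∈ W, f y = x) →
      ∃ l' : List S, (∀ y ∈ l', y ∈ W) ∧ l'.map f = l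
  | [], _ => ⟨[], by simp, rfl⟩
  | x :: l, h => by
      obtain ⟨y, hy, hyx⟩ := h x (by simp)
      obtain ⟨l', hl', hmap⟩ := list_lift f W l (fun z hz => h z (by simp [hz]))
      exact ⟨y :: l', fun z hz => by rcases List.mem_cons.1 hz with rfl | hz; exacts [hy, hl' _ hz],
        by simp [hmap, hyx]⟩

variable {S T : Type*} [SemigroupWithZero S] [SemigroupWithZero T]
  (φ : S →ₙ* T) (hsurj : Function.Surjective φ)
  (hzero : φ ⁻¹' ({0} : Set T) = ({0} : Set S))

include hzero

lemma map_zero' : φ 0 = 0 := by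
  have : (0 : S) ∈ φ ⁻¹' ({0} : Set T) := by rw [hzero]; rfl
  simpa using this

lemma eq_zero_of_map {x : S} (h : φ x = 0) : x = 0 := by
  have : x ∈ φ ⁻¹' ({0} : Set T) := by simpa using h
  rwa [hzero, Set.mem_singleton_iff] at this

lemma prodEq_image_iff (U : Set S) (k : ℕ) :
    ProdEq (0 : T) (φ '' U) k ↔ ProdEq (0 : S) U k := by
  constructor
  · intro h a l ha hl hlen
    apply eq_zero_of_map φ hzero
    rw [← foldl_map_mulHom φ l a]
    exact h (φ a) (l.map φ) ⟨a, ha, rfl⟩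
      (by rintro x hx; obtain ⟨y, hy, rfl⟩ := List.mem_map.1 hx
          exact ⟨y, hl y hy, rfl⟩) (by simpa using hlen)
  · intro h a l ha hl hlen
    obtain ⟨a', ha', rfl⟩ := ha
    obtain ⟨l', hl', rfl⟩ := list_lift φ U l hl
    rw [foldl_map_mulHom φ l' a', h a' l' ha' hl' (by simpa using hlen),
      map_zero' φ hzero]

include hsurj in
lemma prodEq_preimage_iff (V : Set T) (k : ℕ) :
    ProdEq (0 : S) (φ ⁻¹' V) k ↔ ProdEq (0 : T) V k := by
  constructor
  · intro h a l ha hl hlen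
    obtain ⟨a', rfl⟩ := hsurj a
    obtain ⟨l', hl', rfl⟩ := list_lift φ (φ ⁻¹' V) l
      (fun x hx => by obtain ⟨y, rfl⟩ := hsurj x; exact ⟨y, hl _ hx, rfl⟩)
    rw [foldl_map_mulHom φ l' a',
      h a' l' ha hl' (by simpa using hlen), map_zero' φ hzero]
  · intro h a l ha hl hlen
    apply eq_zero_of_map φ hzero
    rw [← foldl_map_mulHom φ l a]
    exact h (φ a) (l.map φ) ha
      (by rintro x hx; obtain ⟨y, hy, rfl⟩ := List.mem_map.1 hx; exact hl y hy)
      (by simpa using hlen)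

lemma nilClass_image (U : Set S) :
    nilClass (0 : T) (φ '' U) = nilClass (0 : S) U := by
  unfold nilClass
  congr 1
  ext k
  simp [prodEq_image_iff φ hzero]

include hsurj in
lemma nilClass_preimage (V : Set T) :
    nilClass (0 : S) (φ ⁻¹' V) = nilClass (0 : T) V := by
  unfold nilClass
  congr 1
  ext k
  simp [prodEq_preimage_iff φ hsurj hzero]

lemma isNil_image {U : Set S} (hU : IsNilSubsg (0 : S) U) :
    IsNilSubsg (0 : T) (φ '' U) := by
  obtain ⟨hsub, k, hk, hp⟩ := hU
  exact ⟨by rintro _ ⟨a, ha, rfl⟩ _ ⟨b, hb, rfl⟩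
            exact ⟨a * b, hsub ha hb, map_mul φ a b⟩,
    k, hk, (prodEq_image_iff φ hzero U k).2 hp⟩

include hsurj in
lemma isNil_preimage {V : Set T} (hV : IsNilSubsg (0 : T) V) :
    IsNilSubsg (0 : S) (φ ⁻¹' V) := by
  obtain ⟨hsub, k, hk, hp⟩ := hV
  exact ⟨fun a ha b hb => by
      simp only [Set.mem_preimage, map_mul]; exact hsub ha hb,
    k, hk, (prodEq_preimage_iff φ hsurj hzero V k).2 hp⟩

end Aux

/-- For a surjective homomorphism `φ : S → T` of semigroups with zero
with `φ⁻¹(0) = {0}` and `Nil^max(S) ≠ ∅`: (i) image preserves the nilpotency class;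
(ii) preimage preserves the nilpotency class; (iii) for every `k`, image and preimage
are mutually inverse bijections between `Nil_k^max(S)` and `Nil_k^max(T)`. -/
theorem stmt2 {S T : Type*} [SemigroupWithZero S] [SemigroupWithZero T]
    (φ : S →ₙ* T) (hsurj : Function.Surjective φ)
    (hzero : φ ⁻¹' ({0} : Set T) = ({0} : Set S))
    (hmax : ∃ U : Set S, Maximal (IsNilSubsg (0 : S)) U) :
    (∀ U : Set S, IsNilSubsg (0 : S) U →
        nilClass (0 : T) (φ '' U) = nilClass (0 : S) U) ∧
    (∀ V : Set T, IsNilSubsg (0 : T) V →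
        nilClass (0 : S) (φ ⁻¹' V) = nilClass (0 : T) V) ∧
    (∀ k : ℕ,
      Set.BijOn (fun U : Set S => φ '' U)
        {U | Maximal (fun W : Set S => IsNilSubsg (0 : S) W ∧ nilClass (0 : S) W ≤ k) U}
        {V | Maximal (fun W : Set T => IsNilSubsg (0 : T) W ∧ nilClass (0 : T) W ≤ k) V} ∧
      Set.BijOn (fun V : Set T => φ ⁻¹' V)
        {V | Maximal (fun W : Set T => IsNilSubsg (0 : T) W ∧ nilClass (0 : T) W ≤ k) V}
        {U | Maximal (fun W : Set S => IsNilSubsg (0 : S) W ∧ nilClass (0 : S) W ≤ k) U} ∧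
      Set.InvOn (fun V : Set T => φ ⁻¹' V) (fun U : Set S => φ '' U)
        {U | Maximal (fun W : Set S => IsNilSubsg (0 : S) W ∧ nilClass (0 : S) W ≤ k) U}
        {V | Maximal (fun W : Set T => IsNilSubsg (0 : T) W ∧ nilClass (0 : T) W ≤ k) V}) := by

  set P : ℕ → Set S → Prop :=
    fun k W => IsNilSubsg (0 : S) W ∧ nilClass (0 : S) W ≤ k with hP
  set Q : ℕ → Set T → Prop :=
    fun k W => IsNilSubsg (0 : T) W ∧ nilClass (0 : T) W ≤ k with hQ
  have himgP : ∀ k (U : Set S), P k U → Q k (φ '' U) := by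
    rintro k U ⟨h1, h2⟩
    exact ⟨isNil_image φ hzero h1, by rwa [nilClass_image φ hzero]⟩
  have hpreQ : ∀ k (V : Set T), Q k V → P k (φ ⁻¹' V) := by
    rintro k V ⟨h1, h2⟩
    exact ⟨isNil_preimage φ hsurj hzero h1,
      by rwa [nilClass_preimage φ hsurj hzero]⟩
  have hri : ∀ V : Set T, φ '' (φ ⁻¹' V) = V :=
    fun V => Set.image_preimage_eq V hsurj
  have hleft : ∀ k (U : Set S), Maximal (P k) U → φ ⁻¹' (φ '' U) = U := by
    intro k U hU
    refine Set.Subset.antisymm (hU.2 (hpreQ k _ (himgP k U hU.1))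
      (Set.subset_preimage_image φ U)) (Set.subset_preimage_image φ U)
  have himg : ∀ k (U : Set S), Maximal (P k) U → Maximal (Q k) (φ '' U) := by
    intro k U hU
    refine ⟨himgP k U hU.1, fun V hV hsub => ?_⟩
    have h1 : U ⊆ φ ⁻¹' V :=
      (Set.subset_preimage_image φ U).trans (Set.preimage_mono hsub)
    have h2 : φ ⁻¹' V ⊆ U := hU.2 (hpreQ k V hV) h1
    calc V = φ '' (φ ⁻¹' V) := (hri V).symm
      _ ⊆ φ '' U := Set.image_mono h2
  have hpre : ∀ k (V : Set T), Maximal (Q k) V → Maximal (P k) (φ ⁻¹' V) := by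
    intro k V hV
    refine ⟨hpreQ k V hV.1, fun W hW hsub => ?_⟩
    have h1 : V ⊆ φ '' W := by
      rw [← hri V]; exact Set.image_mono hsub
    have h2 : φ '' W ⊆ V := hV.2 (himgP k W hW) h1
    exact (Set.subset_preimage_image φ W).trans (Set.preimage_mono h2)
  refine ⟨?_, ?_, ?_⟩
  · intro U _
    exact nilClass_image φ hzero U
  · intro V _
    exact nilClass_preimage φ hsurj hzero V
  · intro k
    refine ⟨⟨fun U hU => himg k U hU, fun U1 h1 U2 h2 he => ?_,
        fun V hV => ⟨φ ⁻¹' V, hpre k V hV, hri V⟩⟩,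
      ⟨fun V hV => hpre k V hV, fun V1 h1 V2 h2 he => ?_,
        fun U hU => ⟨φ '' U, himg k U hU, hleft k U hU⟩⟩,
      fun U hU => hleft k U hU, fun V _ => hri V⟩
    · rw [← hleft k U1 h1, ← hleft k U2 h2]
      simpa using congrArg (φ ⁻¹' ·) he
    · rw [← hri V1, ← hri V2]
      simpa using congrArg (φ '' ·) he


end NilSg
end

section
/- Let n ≥ 1, 1 ≤ k ≤ n, and let N_1 ∪ N_2 ∪ ⋯ ∪ N_k = {1,…,n} be a decomposition of {1,…,n} into an ordered union of k pairwise disjoint nonempty blocks. Then the set T = {A = (a_{i,j}) ∈ Ω_n : (a_{i,j} ≠ 0 and i ∈ N_p and j ∈ N_q) ⇒ p < q} is a maximal element of Nil_k(Ω_n), and its nilpotency class equals k. -/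
/-!
Write `ℓ i` for the block index of `i`. A nonzero entry of a product of `m` elements of `T` sits
at some `(i, j)` with `ℓ i + m ≤ ℓ j`, so every product of `k` elements vanishes. Conversely, as
every block is nonempty, the matrix units `E_{uw}` with `ℓ u < ℓ w` lie in `T` and chain along a
path through the blocks `0, 1, …, m`, giving a nonzero product of `m < k` elements.

For maximality, suppose a nilpotent `T' ⊇ T` of class at most `k` contained a `B` with
`B i j ≠ 0` and `ℓ j ≤ ℓ i`. A chain of `ℓ i` matrix units into `i`, then `B`, then a chain of
`k - 1 - ℓ i` matrix units out of `j` is a product of `k` elements of `T'`. Its entry at the ends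
of the path is positive, because entries of nonnegative matrices cannot cancel.
-/

namespace NilSg

variable {M : Type*}

/-- `Ω n`: the semigroup of `n × n` real matrices with nonnegative entries. -/
def Omega (n : ℕ) : Set (Matrix (Fin n) (Fin n) ℝ) :=
  {A | ∀ i j, 0 ≤ A i j}

/-- `Q n`: the semigroup of `n × n` real matrices all of whose row sums and
column sums equal `1`. -/
def Qset (n : ℕ) : Set (Matrix (Fin n) (Fin n) ℝ) :=
  {A | (∀ i, ∑ j, A i j = 1) ∧ (∀ j, ∑ i, A i j = 1)}

/-- `D n`: the semigroup of `n × n` doubly stochastic real matrices. -/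
def Dset (n : ℕ) : Set (Matrix (Fin n) (Fin n) ℝ) :=
  {A | (∀ i j, 0 ≤ A i j) ∧ (∀ i, ∑ j, A i j = 1) ∧ (∀ j, ∑ i, A i j = 1)}

/-- The matrix all of whose entries equal `1/n`: the zero element of `Q n` and `D n`. -/
noncomputable def On (n : ℕ) : Matrix (Fin n) (Fin n) ℝ :=
  Matrix.of fun _ _ => (n : ℝ)⁻¹

/-- The hyperplane `V` of all vectors whose coordinates sum to `0`. -/
def Vsub (n : ℕ) : Submodule ℝ (Fin n → ℝ) where
  carrier := {x | ∑ i, x i = 0}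
  add_mem' := by
    intro a b ha hb
    simp only [Set.mem_setOf_eq, Pi.add_apply] at *
    simp [Finset.sum_add_distrib, ha, hb]
  zero_mem' := by simp
  smul_mem' := by
    intro c x hx
    simp only [Set.mem_setOf_eq, Pi.smul_apply, smul_eq_mul] at *
    simp [← Finset.mul_sum, hx]

section Products

variable [Monoid M] {z : M} {T : Set M} {k : ℕ}

theorem foldl_mul_eq_prod_cons (a : M) (l : List M) : l.foldl (· * ·) a = (a :: l).prod := by
  simp [List.prod_eq_foldl]

theorem prodEq_of_forall_list_prod
    (h : ∀ L : List M, L.length = k → (∀ x ∈ L, x ∈ T) → L.prod = z) : ProdEq z T k :=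
  fun a l ha hl hlen => by
    rw [foldl_mul_eq_prod_cons]
    exact h _ (by simpa using hlen) (List.forall_mem_cons.2 ⟨ha, hl⟩)

theorem ProdEq.list_prod_eq (h : ProdEq z T k) {L : List M} (hL : L.length = k) (hk : 0 < k)
    (hT : ∀ x ∈ L, x ∈ T) : L.prod = z := by
  obtain _ | ⟨a, l⟩ := L
  · simp only [List.length_nil] at hL; omega
  · rw [← foldl_mul_eq_prod_cons]
    exact h a l (hT a List.mem_cons_self) (fun x hx => hT x (List.mem_cons_of_mem a hx))
      (by simpa using hL)

end Products

section ProductsWithZero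

variable [MonoidWithZero M] {T : Set M} {k m : ℕ}

theorem ProdEq.mono (h : ProdEq 0 T m) (hm : 0 < m) (hmk : m ≤ k) : ProdEq 0 T k :=
  prodEq_of_forall_list_prod fun L hL hT => by
    rw [← L.prod_take_mul_prod_drop m,
      h.list_prod_eq (by simp [hL, hmk]) hm fun x hx => hT x (List.mem_of_mem_take hx), zero_mul]

theorem NilLe.prodEq {S : Set M} (h : NilLe 0 S k T) : ProdEq 0 T k := by
  obtain ⟨-, ⟨-, m, hm, hmT⟩, hk⟩ := h
  obtain ⟨hpos, hclass⟩ := Nat.sInf_mem (s := {k | 0 < k ∧ ProdEq (0 : M) T k}) ⟨m, hm, hmT⟩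
  exact hclass.mono hpos hk

end ProductsWithZero

theorem nilClass_eq [Mul M] {z : M} {T : Set M} {k : ℕ} (hk : 0 < k) (h : ProdEq z T k)
    (hlt : ∀ m, 0 < m → m < k → ¬ ProdEq z T m) : nilClass z T = k :=
  le_antisymm (Nat.sInf_le ⟨hk, h⟩)
    (le_csInf ⟨k, hk, h⟩ fun m ⟨hm, hmT⟩ => not_lt.1 fun hmk => hlt m hm hmk hmT)

section Levels

variable {ι R : Type*} [Semiring R]

theorem exists_ne_zero_of_mul_apply_ne_zero [Fintype ι] {A B : Matrix ι ι R} {i j : ι}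
    (h : (A * B) i j ≠ 0) : ∃ l, A i l ≠ 0 ∧ B l j ≠ 0 := by
  obtain ⟨l, -, hl⟩ := Finset.exists_ne_zero_of_sum_ne_zero h
  exact ⟨l, left_ne_zero_of_mul hl, right_ne_zero_of_mul hl⟩

def RaisesLevelBy (ℓ : ι → ℕ) (s : ℕ) (A : Matrix ι ι R) : Prop :=
  ∀ i j, A i j ≠ 0 → ℓ i + s ≤ ℓ j

variable {ℓ : ι → ℕ}

theorem raisesLevelBy_one [DecidableEq ι] : RaisesLevelBy ℓ 0 (1 : Matrix ι ι R) :=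
  fun i j h => by
    obtain rfl : i = j := by
      by_contra hij
      exact h (Matrix.one_apply_ne hij)
    exact le_rfl

theorem RaisesLevelBy.mul [Fintype ι] {s t : ℕ} {A B : Matrix ι ι R} (hA : RaisesLevelBy ℓ s A)
    (hB : RaisesLevelBy ℓ t B) : RaisesLevelBy ℓ (s + t) (A * B) := fun i j h => by
  obtain ⟨l, hil, hlj⟩ := exists_ne_zero_of_mul_apply_ne_zero h
  have := hA i l hil
  have := hB l j hlj
  omega

theorem raisesLevelBy_list_prod [Fintype ι] [DecidableEq ι] {L : List (Matrix ι ι R)}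
    (h : ∀ x ∈ L, RaisesLevelBy ℓ 1 x) : RaisesLevelBy ℓ L.length L.prod := by
  induction L with
  | nil => exact raisesLevelBy_one
  | cons x L ih =>
    rw [List.prod_cons, List.length_cons, add_comm]
    exact (h x List.mem_cons_self).mul (ih fun y hy => h y (List.mem_cons_of_mem x hy))

theorem RaisesLevelBy.eq_zero {s : ℕ} {A : Matrix ι ι R} (h : RaisesLevelBy ℓ s A)
    (hℓ : ∀ i, ℓ i < s) : A = 0 := by
  ext i j
  by_contra hij
  have := h i j hij
  have := hℓ j
  omega

end Levels

section Nonnegative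

variable {n : ℕ}

def omegaSubmonoid (n : ℕ) : Submonoid (Matrix (Fin n) (Fin n) ℝ) where
  carrier := Omega n
  mul_mem' hA hB i j := by
    rw [Matrix.mul_apply]
    exact Finset.sum_nonneg fun l _ => mul_nonneg (hA i l) (hB l j)
  one_mem' i j := by
    rw [Matrix.one_apply]
    split_ifs <;> norm_num

theorem mul_apply_le_mul_apply {A B : Matrix (Fin n) (Fin n) ℝ} (hA : A ∈ Omega n)
    (hB : B ∈ Omega n) (i l j : Fin n) : A i l * B l j ≤ (A * B) i j :=
  Finset.single_le_sum (fun t _ => mul_nonneg (hA i t) (hB t j)) (Finset.mem_univ l)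

theorem single_mem_omega (u w : Fin n) : Matrix.single u w (1 : ℝ) ∈ Omega n := fun i j => by
  simp only [Matrix.single, Matrix.of_apply]
  split_ifs <;> norm_num

end Nonnegative

section BlockUpper

variable {n k : ℕ} {c : Fin n → Fin k}

def strictBlockUpper (c : Fin n → Fin k) : Set (Matrix (Fin n) (Fin n) ℝ) :=
  {A | A ∈ Omega n ∧ ∀ i j, A i j ≠ 0 → c i < c j}

theorem single_mem_strictBlockUpper {u w : Fin n} (h : c u < c w) :
    Matrix.single u w 1 ∈ strictBlockUpper c := by
  refine ⟨single_mem_omega u w, fun i j hij => ?_⟩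
  obtain ⟨rfl, rfl⟩ : u = i ∧ w = j := by
    by_contra h'
    exact hij (Matrix.single_apply_of_ne _ _ _ _ _ h')
  exact h

theorem isSubsg_strictBlockUpper : IsSubsg (strictBlockUpper c) := fun A hA B hB =>
  ⟨(omegaSubmonoid n).mul_mem hA.1 hB.1, fun i j h => by
    obtain ⟨l, hil, hlj⟩ := exists_ne_zero_of_mul_apply_ne_zero h
    exact (hA.2 i l hil).trans (hB.2 l j hlj)⟩

theorem prodEq_strictBlockUpper : ProdEq 0 (strictBlockUpper c) k :=
  prodEq_of_forall_list_prod fun L hL hT => by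
    refine (raisesLevelBy_list_prod (ℓ := fun i => (c i : ℕ)) fun x hx i j hij => ?_).eq_zero ?_
    · exact (hT x hx).2 i j hij
    · simp [hL]

theorem exists_chain_up (hc : Function.Surjective c) (u : Fin n) :
    ∀ m, (c u : ℕ) + m < k → ∃ (w : Fin n) (L : List (Matrix (Fin n) (Fin n) ℝ)),
      (c w : ℕ) = c u + m ∧ L.length = m ∧ (∀ x ∈ L, x ∈ strictBlockUpper c) ∧ 0 < L.prod u w
  | 0, _ => ⟨u, [], rfl, rfl, by simp, by simp⟩
  | m + 1, h => by
    obtain ⟨w, L, hw, hL, hT, hpos⟩ := exists_chain_up hc u m (by omega)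
    obtain ⟨w', hw'⟩ := hc ⟨c u + m + 1, by omega⟩
    refine ⟨w', L ++ [Matrix.single w w' 1], by simp [hw', add_assoc], by simp [hL], ?_, ?_⟩
    · simp only [List.mem_append, List.mem_singleton]
      rintro x (hx | rfl)
      · exact hT x hx
      · exact single_mem_strictBlockUpper (by simp [Fin.lt_def, hw, hw'])
    · simpa using hpos

theorem exists_chain_down (hc : Function.Surjective c) (w : Fin n) :
    ∀ m, m ≤ (c w : ℕ) → ∃ (u : Fin n) (L : List (Matrix (Fin n) (Fin n) ℝ)),
      (c u : ℕ) + m = c w ∧ L.length = m ∧ (∀ x ∈ L, x ∈ strictBlockUpper c) ∧ 0 < L.prod u w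
  | 0, _ => ⟨w, [], rfl, rfl, by simp, by simp⟩
  | m + 1, h => by
    obtain ⟨u, L, hu, hL, hT, hpos⟩ := exists_chain_down hc w m (by omega)
    obtain ⟨u', hu'⟩ := hc ⟨c u - 1, by omega⟩
    refine ⟨u', Matrix.single u' u 1 :: L, by simp only [hu']; omega, by simp [hL], ?_, ?_⟩
    · refine List.forall_mem_cons.2 ⟨single_mem_strictBlockUpper ?_, hT⟩
      simp only [Fin.lt_def, hu']
      omega
    · simpa using hpos

theorem not_prodEq_strictBlockUpper (hc : Function.Surjective c) {m : ℕ} (hm : 0 < m)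
    (hmk : m < k) : ¬ ProdEq 0 (strictBlockUpper c) m := by
  intro h
  obtain ⟨u, hu⟩ := hc ⟨0, by omega⟩
  obtain ⟨w, L, -, hL, hT, hpos⟩ := exists_chain_up hc u m (by simp [hu, hmk])
  simp [h.list_prod_eq hL hm hT] at hpos

theorem nilClass_strictBlockUpper (hc : Function.Surjective c) (hk : 0 < k) :
    nilClass 0 (strictBlockUpper c) = k :=
  nilClass_eq hk prodEq_strictBlockUpper fun _ hm hmk => not_prodEq_strictBlockUpper hc hm hmk

theorem mem_strictBlockUpper_of_prodEq (hc : Function.Surjective c)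
    {T : Set (Matrix (Fin n) (Fin n) ℝ)} (hsub : strictBlockUpper c ⊆ T) (hΩ : T ⊆ Omega n)
    (hT : ProdEq 0 T k) {B : Matrix (Fin n) (Fin n) ℝ} (hB : B ∈ T) :
    B ∈ strictBlockUpper c := by
  refine ⟨hΩ hB, fun i j hij => not_le.1 fun hji => ?_⟩
  have hik := (c i).isLt
  obtain ⟨u, L₁, -, hL₁, hT₁, hpos₁⟩ := exists_chain_down hc i (c i) le_rfl
  obtain ⟨w, L₂, -, hL₂, hT₂, hpos₂⟩ := exists_chain_up hc j (k - 1 - c i) (by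
    rw [Fin.le_def] at hji
    omega)
  have hmem : ∀ x ∈ L₁ ++ B :: L₂, x ∈ T := by
    simp only [List.mem_append, List.mem_cons]
    rintro x (hx | rfl | hx)
    exacts [hsub (hT₁ x hx), hB, hsub (hT₂ x hx)]
  have hΩ₁ := (omegaSubmonoid n).list_prod_mem fun x hx => (hT₁ x hx).1
  have hΩ₂ := (omegaSubmonoid n).list_prod_mem fun x hx => (hT₂ x hx).1
  have hBij : 0 < B i j := (hΩ hB i j).lt_of_ne' hij
  have hpos : 0 < (L₁ ++ B :: L₂).prod u w := by
    rw [List.prod_append, List.prod_cons]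
    calc 0 < L₁.prod u i * (B i j * L₂.prod j w) := by positivity
      _ ≤ L₁.prod u i * (B * L₂.prod) i w :=
        mul_le_mul_of_nonneg_left (mul_apply_le_mul_apply (hΩ hB) hΩ₂ _ _ _) hpos₁.le
      _ ≤ _ := mul_apply_le_mul_apply hΩ₁ ((omegaSubmonoid n).mul_mem (hΩ hB) hΩ₂) _ _ _
  simp [hT.list_prod_eq (by simp only [List.length_append, List.length_cons, hL₁, hL₂]; omega) (by omega) hmem] at hpos

theorem maximal_strictBlockUpper (hc : Function.Surjective c) (hk : 0 < k) :
    Maximal (NilLe 0 (Omega n) k) (strictBlockUpper c) :=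
  ⟨⟨fun _ hA => hA.1, ⟨isSubsg_strictBlockUpper, k, hk, prodEq_strictBlockUpper⟩,
      (nilClass_strictBlockUpper hc hk).le⟩,
    fun _ hT hsub _ hB => mem_strictBlockUpper_of_prodEq hc hsub hT.1 hT.prodEq hB⟩

end BlockUpper

theorem stmt6_general (n k : ℕ) (hk1 : 1 ≤ k)
    (c : Fin n → Fin k) (hc : Function.Surjective c) :
    Maximal (NilLe (0 : Matrix (Fin n) (Fin n) ℝ) (Omega n) k)
        {A | A ∈ Omega n ∧ ∀ i j, A i j ≠ 0 → c i < c j} ∧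
      nilClass (0 : Matrix (Fin n) (Fin n) ℝ)
        {A | A ∈ Omega n ∧ ∀ i j, A i j ≠ 0 → c i < c j} = k :=
  ⟨maximal_strictBlockUpper hc hk1, nilClass_strictBlockUpper hc hk1⟩

/-- For an ordered decomposition of `{1,…,n}` into `k` pairwise
disjoint nonempty blocks `N_1 ∪ … ∪ N_k` (encoded by the surjection `c`, with
`N_p = c⁻¹(p)`), the set `T = {A ∈ Ω_n : A i j ≠ 0 → c i < c j}` is a maximal
element of `Nil_k(Ω_n)` and its nilpotency class equals `k`. -/
theorem stmt6 (n k : ℕ) (hn : 1 ≤ n) (hk1 : 1 ≤ k) (hkn : k ≤ n)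
    (c : Fin n → Fin k) (hc : Function.Surjective c) :
    Maximal (NilLe (0 : Matrix (Fin n) (Fin n) ℝ) (Omega n) k)
        {A | A ∈ Omega n ∧ ∀ i j, A i j ≠ 0 → c i < c j} ∧
      nilClass (0 : Matrix (Fin n) (Fin n) ℝ)
        {A | A ∈ Omega n ∧ ∀ i j, A i j ≠ 0 → c i < c j} = k :=
  stmt6_general n k hk1 c hc

end NilSg
end

section
/- Let n ≥ 1 and 1 ≤ k < n. The map sending an ordered decomposition N_1 ∪ ⋯ ∪ N_k = {1,…,n} into k pairwise disjoint nonempty blocks to the set T = {A = (a_{i,j}) ∈ Ω_n : (a_{i,j} ≠ 0 and i ∈ N_p and j ∈ N_q) ⇒ p < q} is a bijection onto the set of maximal elements of Nil_k(Ω_n). In particular, the number of maximal elements of Nil_k(Ω_n) equals ∑_{i=0}^{k-1} (-1)^i · C(k,i) · (k-i)^n. -/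
namespace NilSg

variable {M : Type*}

/-! ### Auxiliary development -/

open Matrix in
lemma omega_mul {n : ℕ} {A B : Matrix (Fin n) (Fin n) ℝ}
    (hA : A ∈ Omega n) (hB : B ∈ Omega n) : A * B ∈ Omega n := by
  intro i j
  rw [Matrix.mul_apply]
  exact Finset.sum_nonneg fun t _ => mul_nonneg (hA i t) (hB t j)

lemma foldl_omega {n : ℕ} : ∀ (l : List (Matrix (Fin n) (Fin n) ℝ))
    (a : Matrix (Fin n) (Fin n) ℝ), a ∈ Omega n → (∀ x ∈ l, x ∈ Omega n) →
    l.foldl (· * ·) a ∈ Omega n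
  | [], a, ha, _ => ha
  | x :: l, a, ha, hl => by
    simpa using foldl_omega l (a * x) (omega_mul ha (hl x (by simp)))
      fun y hy => hl y (by simp [hy])

lemma mul_pos_entry {n : ℕ} {A B : Matrix (Fin n) (Fin n) ℝ}
    (hA : A ∈ Omega n) (hB : B ∈ Omega n) {i t j : Fin n}
    (h1 : 0 < A i t) (h2 : 0 < B t j) : 0 < (A * B) i j := by
  rw [Matrix.mul_apply]
  have : (0:ℝ) < A i t * B t j := mul_pos h1 h2
  calc (0:ℝ) < A i t * B t j := this
    _ ≤ ∑ s, A i s * B s j := Finset.single_le_sum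
        (fun s _ => mul_nonneg (hA i s) (hB s j)) (Finset.mem_univ t)

lemma mul_entry_ne {n : ℕ} {A B : Matrix (Fin n) (Fin n) ℝ} {i j : Fin n}
    (h : (A * B) i j ≠ 0) : ∃ t, A i t ≠ 0 ∧ B t j ≠ 0 := by
  rw [Matrix.mul_apply] at h
  obtain ⟨t, -, ht⟩ := Finset.exists_ne_zero_of_sum_ne_zero h
  exact ⟨t, fun h0 => ht (by simp [h0]), fun h0 => ht (by simp [h0])⟩

/-- The candidate maximal nilpotent subsemigroup attached to `c`. -/
def Tc {n k : ℕ} (c : Fin n → Fin k) : Set (Matrix (Fin n) (Fin n) ℝ) :=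
  {A | A ∈ Omega n ∧ ∀ i j, A i j ≠ 0 → c i < c j}

lemma Tc_subsg {n k : ℕ} (c : Fin n → Fin k) : IsSubsg (Tc c) := by
  intro a ha b hb
  refine ⟨omega_mul ha.1 hb.1, fun i j hij => ?_⟩
  obtain ⟨t, h1, h2⟩ := mul_entry_ne hij
  exact (ha.2 i t h1).trans (hb.2 t j h2)

lemma foldl_entry_lt_aux {n k : ℕ} (c : Fin n → Fin k) :
    ∀ (l : List (Matrix (Fin n) (Fin n) ℝ)) (a : Matrix (Fin n) (Fin n) ℝ) (d : ℕ),
    (∀ i j, a i j ≠ 0 → (c i : ℕ) + d < (c j : ℕ)) → (∀ x ∈ l, x ∈ Tc c) →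
    ∀ i j, (l.foldl (· * ·) a) i j ≠ 0 → (c i : ℕ) + d + l.length < (c j : ℕ)
  | [], a, d, ha, _, i, j, hij => by
    simpa using ha i j hij
  | x :: l, a, d, ha, hl, i, j, hij => by
    have hx : x ∈ Tc c := hl x (by simp)
    have hax : ∀ i j, (a * x) i j ≠ 0 → (c i : ℕ) + (d + 1) < (c j : ℕ) := by
      intro i j h
      obtain ⟨t, h1, h2⟩ := mul_entry_ne h
      have := ha i t h1
      have := hx.2 t j h2
      omega
    have := foldl_entry_lt_aux c l (a * x) (d + 1) hax
      (fun y hy => hl y (by simp [hy])) i j (by simpa using hij)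
    simp only [List.length_cons]
    omega

lemma foldl_entry_lt {n k : ℕ} (c : Fin n → Fin k)
    (l : List (Matrix (Fin n) (Fin n) ℝ)) (a : Matrix (Fin n) (Fin n) ℝ)
    (ha : a ∈ Tc c) (hl : ∀ x ∈ l, x ∈ Tc c)
    (i j : Fin n) (hij : (l.foldl (· * ·) a) i j ≠ 0) :
    (c i : ℕ) + l.length < (c j : ℕ) := by
  have := foldl_entry_lt_aux c l a 0 (fun i j h => by simpa using ha.2 i j h) hl i j hij
  omega

lemma Tc_prodEq {n k : ℕ} (c : Fin n → Fin k) :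
    ProdEq (0 : Matrix (Fin n) (Fin n) ℝ) (Tc c) k := by
  intro a l ha hl hlen
  ext i j
  by_contra h
  have := foldl_entry_lt c l a ha hl i j (by simpa using h)
  have hcj : (c j : ℕ) < k := (c j).isLt
  omega

lemma Tc_nilLe {n k : ℕ} (hk : 0 < k) (c : Fin n → Fin k) :
    NilLe (0 : Matrix (Fin n) (Fin n) ℝ) (Omega n) k (Tc c) := by
  refine ⟨fun A hA => hA.1, ⟨Tc_subsg c, k, hk, Tc_prodEq c⟩, Nat.sInf_le ⟨hk, Tc_prodEq c⟩⟩

lemma exists_prodEq_min {M : Type*} [Mul M] {z : M} {S T : Set M} {k : ℕ}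
    (h : NilLe z S k T) : ∃ m, 0 < m ∧ m ≤ k ∧ ProdEq z T m := by
  obtain ⟨-, ⟨-, k', hk', hp⟩, hle⟩ := h
  have hne : {m | 0 < m ∧ ProdEq z T m}.Nonempty := ⟨k', hk', hp⟩
  obtain ⟨h1, h2⟩ := Nat.sInf_mem hne
  exact ⟨_, h1, hle, h2⟩

lemma prodEq_of_le {M : Type*} [Mul M] {z : M} {T : Set M} {m : ℕ}
    (hsub : IsSubsg T) (hp : ProdEq z T m) (hm : 0 < m) :
    ∀ (l : List M) (a : M), a ∈ T → (∀ x ∈ l, x ∈ T) → m ≤ l.length + 1 →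
      l.foldl (· * ·) a = z
  | l, a, ha, hl, hlen => by
    rcases eq_or_lt_of_le hlen with h | h
    · exact hp a l ha hl h.symm
    · match l with
      | [] => simp at h; omega
      | x :: l =>
        have : l.foldl (· * ·) (a * x) = z :=
          prodEq_of_le hsub hp hm l (a * x) (hsub ha (hl x (by simp)))
            (fun y hy => hl y (by simp [hy])) (by simp at h ⊢; omega)
        simpa using this
/-- One-step right extension of a positive path. -/
lemma step_pos {n : ℕ} {P x : Matrix (Fin n) (Fin n) ℝ} {s e e' : Fin n}
    (hP : P ∈ Omega n) (hx : x ∈ Omega n) (h1 : 0 < P s e) (h2 : 0 < x e e') :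
    P * x ∈ Omega n ∧ 0 < (P * x) s e' :=
  ⟨omega_mul hP hx, mul_pos_entry hP hx h1 h2⟩

/-- Appending a chain of matrices with positive linking entries keeps a positive entry. -/
lemma foldl_append_chain {n : ℕ} (M : ℕ → Matrix (Fin n) (Fin n) ℝ) (f : ℕ → Fin n)
    (s : Fin n) :
    ∀ (d : ℕ) (a : Matrix (Fin n) (Fin n) ℝ) (l : List (Matrix (Fin n) (Fin n) ℝ)),
    (l.foldl (· * ·) a ∈ Omega n) → 0 < (l.foldl (· * ·) a) s (f 0) →
    (∀ t < d, M t ∈ Omega n ∧ 0 < M t (f t) (f (t + 1))) →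
    ((l ++ (List.range d).map M).foldl (· * ·) a ∈ Omega n ∧
      0 < ((l ++ (List.range d).map M).foldl (· * ·) a) s (f d))
  | 0, a, l, h1, h2, _ => by simpa using ⟨h1, h2⟩
  | d + 1, a, l, h1, h2, h3 => by
    obtain ⟨ih1, ih2⟩ := foldl_append_chain M f s d a l h1 h2
      (fun t ht => h3 t (by omega))
    obtain ⟨hM, hMd⟩ := h3 d (by omega)
    have key := step_pos ih1 hM ih2 hMd
    rw [List.range_succ, List.map_append, ← List.append_assoc]
    constructor
    · simpa [List.foldl_append] using key.1
    · simpa [List.foldl_append] using key.2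
/-- Elementary matrix with a single `1` entry. -/
noncomputable def Ee {n : ℕ} (x y : Fin n) : Matrix (Fin n) (Fin n) ℝ :=
  Matrix.single x y 1

lemma Ee_omega {n : ℕ} (x y : Fin n) : Ee x y ∈ Omega n := by
  intro i j
  simp only [Ee, Matrix.single, Matrix.of_apply]
  split_ifs <;> norm_num

lemma Ee_apply_same {n : ℕ} (x y : Fin n) : Ee x y x y = 1 :=
  Matrix.single_apply_same x y 1

lemma Ee_ne_zero {n : ℕ} {x y i j : Fin n} (h : Ee x y i j ≠ 0) : i = x ∧ j = y := by
  by_contra hc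
  apply h
  simp only [Ee, Matrix.single, Matrix.of_apply]
  rw [if_neg]
  tauto

lemma Ee_mem_Tc {n k : ℕ} {c : Fin n → Fin k} {x y : Fin n} (h : c x < c y) :
    Ee x y ∈ Tc c := by
  refine ⟨Ee_omega x y, fun i j hij => ?_⟩
  obtain ⟨rfl, rfl⟩ := Ee_ne_zero hij
  exact h
/-- A section of a surjection `c`, through a designated point. -/
noncomputable def sect {n k : ℕ} {c : Fin n → Fin k} (hc : Function.Surjective c)
    (v : ℕ) (i : Fin n) : ℕ → Fin n :=
  fun t => if h : t < k then (if t = v then i else Function.surjInv hc ⟨t, h⟩) else i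

lemma sect_spec {n k : ℕ} {c : Fin n → Fin k} (hc : Function.Surjective c)
    {v : ℕ} {i : Fin n} (hi : (c i : ℕ) = v) {t : ℕ} (ht : t < k) :
    (c (sect hc v i t) : ℕ) = t := by
  simp only [sect, dif_pos ht]
  split_ifs with h
  · omega
  · rw [Function.surjInv_eq hc]

lemma sect_self {n k : ℕ} {c : Fin n → Fin k} (hc : Function.Surjective c)
    {v : ℕ} {i : Fin n} (hv : v < k) : sect hc v i v = i := by
  simp [sect, dif_pos hv]

/-- Key maximality argument: any nilpotent subsemigroup of class ≤ k containing `Tc c`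
(for surjective `c`) is contained in `Tc c`. -/
lemma subset_Tc_of_superset {n k : ℕ} (hk : 1 ≤ k) {c : Fin n → Fin k}
    (hc : Function.Surjective c) {T' : Set (Matrix (Fin n) (Fin n) ℝ)}
    (hT' : NilLe (0 : Matrix (Fin n) (Fin n) ℝ) (Omega n) k T')
    (hsub : Tc c ⊆ T') : T' ⊆ Tc c := by
  intro A hA
  by_contra hA'
  have hAΩ : A ∈ Omega n := hT'.1 hA
  have : ∃ i j, A i j ≠ 0 ∧ ¬ c i < c j := by
    by_contra h
    push_neg at h
    exact hA' ⟨hAΩ, h⟩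
  obtain ⟨i, j, hAij, hij⟩ := this
  have hApos : 0 < A i j := lt_of_le_of_ne (hAΩ i j) (Ne.symm hAij)
  set v : ℕ := (c i : ℕ) with hv
  set w : ℕ := (c j : ℕ) with hw
  have hwv : w ≤ v := by
    simp only [not_lt, Fin.le_def] at hij
    omega
  have hvk : v < k := (c i).isLt
  have hwk : w < k := (c j).isLt
  obtain ⟨m, hm0, hmk, hmp⟩ := exists_prodEq_min hT'
  have hsubsg : IsSubsg T' := hT'.2.1.1
  -- sections
  set g : ℕ → Fin n := sect hc v i with hg
  set g' : ℕ → Fin n := sect hc w j with hg'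
  have hgspec : ∀ t < k, (c (g t) : ℕ) = t := fun t ht => sect_spec hc rfl ht
  have hg'spec : ∀ t < k, (c (g' t) : ℕ) = t := fun t ht => sect_spec hc rfl ht
  have hgv : g v = i := sect_self hc hvk
  have hg'w : g' w = j := sect_self hc hwk
  -- the second chain: A followed by elementary matrices climbing from j
  set M2 : ℕ → Matrix (Fin n) (Fin n) ℝ := fun t =>
    match t with
    | 0 => A
    | (u+1) => Ee (g' (w + u)) (g' (w + u + 1)) with hM2
  set f2 : ℕ → Fin n := fun t =>
    match t with
    | 0 => i
    | (u+1) => g' (w + u) with hf2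
  have hM2T : ∀ t < k - w, M2 t ∈ T' := by
    intro t ht
    match t with
    | 0 => exact hA
    | (u+1) =>
      refine hsub (Ee_mem_Tc ?_)
      rw [Fin.lt_def]
      have h1 : (c (g' (w + u)) : ℕ) = w + u := hg'spec _ (by omega)
      have h2 : (c (g' (w + u + 1)) : ℕ) = w + u + 1 := hg'spec _ (by omega)
      omega
  have hM2chain : ∀ t < k - w, M2 t ∈ Omega n ∧ 0 < M2 t (f2 t) (f2 (t + 1)) := by
    intro t ht
    match t with
    | 0 =>
      refine ⟨hAΩ, ?_⟩
      show 0 < A i (g' (w + 0))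
      rw [show w + 0 = w from rfl, hg'w]
      exact hApos
    | (u+1) =>
      refine ⟨Ee_omega _ _, ?_⟩
      show 0 < Ee (g' (w + u)) (g' (w + u + 1)) (g' (w + u)) (g' (w + u + 1))
      rw [Ee_apply_same]; norm_num
  have hf2end : f2 (k - w) = g' (k - 1) := by
    have hkw : k - w = (k - 1 - w) + 1 := by omega
    rw [hkw]
    show g' (w + (k - 1 - w)) = g' (k - 1)
    congr 1
    omega
  rcases Nat.eq_zero_or_pos v with hv0 | hv1
  · -- case v = 0, hence w = 0 : product is A followed by the climbing chain
    have hw0 : w = 0 := by omega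
    have start : ([] : List (Matrix (Fin n) (Fin n) ℝ)).foldl (· * ·) A ∈ Omega n := by
      simpa using hAΩ
    have key := foldl_append_chain (fun u => M2 (u + 1)) (fun u => f2 (u + 1)) i
      (k - 1) A [] start (by
        have := hM2chain 0 (by omega)
        simpa using this.2)
      (fun t ht => hM2chain (t + 1) (by omega))
    have hzero : (([] ++ (List.range (k - 1)).map fun u => M2 (u + 1)).foldl (· * ·) A)
        = 0 := by
      apply prodEq_of_le hsubsg hmp hm0
      · exact hA
      · intro x hx
        simp only [List.nil_append, List.mem_map, List.mem_range] at hx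
        obtain ⟨u, hu, rfl⟩ := hx
        exact hM2T (u + 1) (by omega)
      · simp only [List.nil_append, List.length_map, List.length_range]
        omega
    rw [hzero] at key
    exact absurd key.2 (by simp)
  · -- case v ≥ 1 : prefix chain of elementary matrices climbing to i, then A, then climb
    have hk2 : 2 ≤ k := by omega
    set M1 : ℕ → Matrix (Fin n) (Fin n) ℝ := fun t => Ee (g (t + 1)) (g (t + 2)) with hM1
    set f1 : ℕ → Fin n := fun t => g (t + 1) with hf1
    have hM1T : ∀ t < v - 1, M1 t ∈ T' := by
      intro t ht
      refine hsub (Ee_mem_Tc ?_)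
      rw [Fin.lt_def]
      have h1 : (c (g (t + 1)) : ℕ) = t + 1 := hgspec _ (by omega)
      have h2 : (c (g (t + 2)) : ℕ) = t + 2 := hgspec _ (by omega)
      omega
    have ha0 : Ee (g 0) (g 1) ∈ Tc c := by
      refine Ee_mem_Tc ?_
      rw [Fin.lt_def]
      have h1 : (c (g 0) : ℕ) = 0 := hgspec _ (by omega)
      have h2 : (c (g 1) : ℕ) = 1 := hgspec _ (by omega)
      omega
    have start : (([] : List (Matrix (Fin n) (Fin n) ℝ)).foldl (· * ·) (Ee (g 0) (g 1)))
        ∈ Omega n ∧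
        0 < (([] : List (Matrix (Fin n) (Fin n) ℝ)).foldl (· * ·) (Ee (g 0) (g 1)))
          (g 0) (f1 0) := by
      constructor
      · simpa using Ee_omega (g 0) (g 1)
      · show (0:ℝ) < Ee (g 0) (g 1) (g 0) (g (0 + 1))
        rw [Ee_apply_same]; norm_num
    have key1 := foldl_append_chain M1 f1 (g 0) (v - 1) (Ee (g 0) (g 1)) []
      start.1 start.2
      (fun t ht => by
        refine ⟨Ee_omega _ _, ?_⟩
        show (0:ℝ) < Ee (g (t + 1)) (g (t + 2)) (g (t + 1)) (g (t + 1 + 1))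
        rw [show t + 1 + 1 = t + 2 from rfl, Ee_apply_same]; norm_num)
    have hf1end : f1 (v - 1) = i := by
      show g (v - 1 + 1) = i
      rw [show v - 1 + 1 = v by omega, hgv]
    rw [hf1end] at key1
    -- now append the second chain
    have key2 := foldl_append_chain M2 f2 (g 0) (k - w) (Ee (g 0) (g 1))
      ([] ++ (List.range (v - 1)).map M1) key1.1 key1.2 hM2chain
    have hzero : ((([] ++ (List.range (v - 1)).map M1) ++ (List.range (k - w)).map M2).foldl
        (· * ·) (Ee (g 0) (g 1))) = 0 := by
      apply prodEq_of_le hsubsg hmp hm0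
      · exact hsub ha0
      · intro x hx
        simp only [List.nil_append, List.mem_append, List.mem_map, List.mem_range] at hx
        rcases hx with ⟨u, hu, rfl⟩ | ⟨u, hu, rfl⟩
        · exact hM1T u hu
        · exact hM2T u hu
      · simp only [List.nil_append, List.length_append, List.length_map, List.length_range]
        omega
    rw [hzero] at key2
    exact absurd key2.2 (by simp)
section Height

variable {α : Type*} [Fintype α] [Nonempty α] {r : α → α → Prop} [DecidableRel r]

/-- The height of an element in a well-founded relation. -/
noncomputable def heightFn (wf : WellFounded r) : α → ℕ :=
  wf.fix fun i ih => Finset.univ.sup fun j => if h : r j i then ih j h + 1 else 0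

lemma heightFn_eq (wf : WellFounded r) (i : α) :
    heightFn wf i = Finset.univ.sup fun j => if r j i then heightFn wf j + 1 else 0 := by
  classical
  rw [heightFn, WellFounded.fix_eq]
  congr 1

lemma heightFn_lt (wf : WellFounded r) {i j : α} (h : r j i) :
    heightFn wf j < heightFn wf i := by
  classical
  conv_rhs => rw [heightFn_eq]
  have := Finset.le_sup (f := fun j => if r j i then heightFn wf j + 1 else 0)
    (Finset.mem_univ j)
  simp only [if_pos h] at this
  omega

lemma heightFn_attained (wf : WellFounded r) {i : α} {h : ℕ}
    (hi : heightFn wf i = h + 1) : ∃ j, r j i ∧ heightFn wf j = h := by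
  classical
  rw [heightFn_eq] at hi
  obtain ⟨j, -, hj⟩ := Finset.exists_mem_eq_sup Finset.univ Finset.univ_nonempty
    (fun j => if r j i then heightFn wf j + 1 else 0)
  rw [hi] at hj
  by_cases hr : r j i
  · rw [if_pos hr] at hj
    exact ⟨j, hr, by omega⟩
  · rw [if_neg hr] at hj
    omega

lemma heightFn_downward (wf : WellFounded r) :
    ∀ (h : ℕ) (i : α), heightFn wf i = h → ∀ v < h, ∃ j, heightFn wf j = v
  | 0, i, hi, v, hv => by omega
  | h + 1, i, hi, v, hv => by
    obtain ⟨j, -, hj⟩ := heightFn_attained wf hi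
    rcases Nat.lt_succ_iff_lt_or_eq.mp hv with hv' | rfl
    · exact heightFn_downward wf h j hj v hv'
    · exact ⟨j, hj⟩

end Height

section Structure

variable {n : ℕ} {T : Set (Matrix (Fin n) (Fin n) ℝ)}

/-- The reachability relation of a set of nonnegative matrices. -/
def rel (T : Set (Matrix (Fin n) (Fin n) ℝ)) (i j : Fin n) : Prop :=
  ∃ A ∈ T, A i j ≠ 0

lemma rel_trans (hΩ : T ⊆ Omega n) (hs : IsSubsg T) :
    Transitive (rel T) := by
  rintro i j l ⟨A, hA, hAij⟩ ⟨B, hB, hBjl⟩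
  refine ⟨A * B, hs hA hB, ne_of_gt ?_⟩
  exact mul_pos_entry (hΩ hA) (hΩ hB)
    (lt_of_le_of_ne (hΩ hA i j) (Ne.symm hAij))
    (lt_of_le_of_ne (hΩ hB j l) (Ne.symm hBjl))

lemma rel_irrefl {m : ℕ} (hΩ : T ⊆ Omega n) (hm0 : 0 < m)
    (hm : ProdEq (0 : Matrix (Fin n) (Fin n) ℝ) T m) : Irreflexive (rel T) := by
  rintro i ⟨A, hA, hAii⟩
  have hpos : 0 < A i i := lt_of_le_of_ne (hΩ hA i i) (Ne.symm hAii)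
  have start : ([] : List (Matrix (Fin n) (Fin n) ℝ)).foldl (· * ·) A ∈ Omega n := by
    simpa using hΩ hA
  have key := foldl_append_chain (fun _ => A) (fun _ => i) i (m - 1) A []
    start (by simpa using hpos) (fun t ht => ⟨hΩ hA, hpos⟩)
  have hzero : (([] ++ (List.range (m - 1)).map fun _ => A).foldl (· * ·) A) = 0 := by
    apply hm
    · exact hA
    · intro x hx
      simp only [List.nil_append, List.mem_map, List.mem_range] at hx
      obtain ⟨u, -, rfl⟩ := hx
      exact hA
    · simp only [List.nil_append, List.length_map, List.length_range]
      omega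
  rw [hzero] at key
  exact absurd key.2 (by simp)

noncomputable instance {T : Set (Matrix (Fin n) (Fin n) ℝ)} : DecidableRel (rel T) :=
  fun _ _ => Classical.dec _

lemma rel_wf {m : ℕ} (hΩ : T ⊆ Omega n) (hs : IsSubsg T) (hm0 : 0 < m)
    (hm : ProdEq (0 : Matrix (Fin n) (Fin n) ℝ) T m) : WellFounded (rel T) := by
  haveI : IsTrans (Fin n) (rel T) := ⟨fun _ _ _ h1 h2 => rel_trans hΩ hs h1 h2⟩
  haveI : IsIrrefl (Fin n) (rel T) := ⟨rel_irrefl hΩ hm0 hm⟩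
  exact Finite.wellFounded_of_trans_of_irrefl (rel T)

/-- Products of `heightFn i` elements of `T` witnessing a chain of height ending at `i`. -/
lemma heightFn_chain (hn : 1 ≤ n) {m : ℕ} (hΩ : T ⊆ Omega n) (hs : IsSubsg T) (hm0 : 0 < m)
    (hm : ProdEq (0 : Matrix (Fin n) (Fin n) ℝ) T m) :
    haveI : Nonempty (Fin n) := ⟨⟨0, hn⟩⟩
    ∀ (h : ℕ) (i : Fin n), heightFn (rel_wf hΩ hs hm0 hm) i = h + 1 →
      ∃ (a : Matrix (Fin n) (Fin n) ℝ) (l : List (Matrix (Fin n) (Fin n) ℝ)) (s : Fin n),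
        a ∈ T ∧ (∀ x ∈ l, x ∈ T) ∧ l.length + 1 = h + 1 ∧
        0 < (l.foldl (· * ·) a) s i := by
  haveI : Nonempty (Fin n) := ⟨⟨0, hn⟩⟩
  intro h
  induction h with
  | zero =>
    intro i hi
    obtain ⟨j, ⟨A, hA, hAji⟩, -⟩ := heightFn_attained _ hi
    exact ⟨A, [], j, hA, by simp, by simp,
      by simpa using lt_of_le_of_ne (hΩ hA j i) (Ne.symm hAji)⟩
  | succ h ih =>
    intro i hi
    obtain ⟨j, ⟨A, hA, hAji⟩, hj⟩ := heightFn_attained _ hi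
    obtain ⟨a, l, s, ha, hl, hlen, hpos⟩ := ih j hj
    have hΩprod : l.foldl (· * ·) a ∈ Omega n :=
      foldl_omega l a (hΩ ha) (fun x hx => hΩ (hl x hx))
    have hApos : 0 < A j i := lt_of_le_of_ne (hΩ hA j i) (Ne.symm hAji)
    have key := step_pos hΩprod (hΩ hA) hpos hApos
    refine ⟨a, l ++ [A], s, ha, ?_, by simp; omega, ?_⟩
    · intro x hx
      rcases List.mem_append.mp hx with hx | hx
      · exact hl x hx
      · simp at hx; subst hx; exact hA
    · rw [List.foldl_append]
      simpa using key.2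

lemma heightFn_bound (hn : 1 ≤ n) {m : ℕ} (hΩ : T ⊆ Omega n) (hs : IsSubsg T) (hm0 : 0 < m)
    (hm : ProdEq (0 : Matrix (Fin n) (Fin n) ℝ) T m) :
    haveI : Nonempty (Fin n) := ⟨⟨0, hn⟩⟩
    ∀ i : Fin n, heightFn (rel_wf hΩ hs hm0 hm) i < m := by
  haveI : Nonempty (Fin n) := ⟨⟨0, hn⟩⟩
  intro i
  by_contra hge
  push_neg at hge
  set H := heightFn (rel_wf hΩ hs hm0 hm) i with hH
  have hh : heightFn (rel_wf hΩ hs hm0 hm) i = (H - 1) + 1 := by omega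
  obtain ⟨a, l, s, ha, hl, hlen, hposE⟩ := heightFn_chain hn hΩ hs hm0 hm (H - 1) i hh
  have : l.foldl (· * ·) a = 0 := prodEq_of_le hs hm hm0 l a ha hl (by omega)
  rw [this] at hposE
  exact absurd hposE (by simp)

end Structure
/-- Refining a layering with downward-closed image into a surjection onto `Fin k`. -/
lemma refine {n k : ℕ} (hkn : k ≤ n) :
    ∀ (d h : ℕ), h + d = k → (∀ c₀ : Fin n → ℕ, (∀ i, c₀ i < h) →
      (∀ v < h, ∃ i, c₀ i = v) →
      ∃ c : Fin n → Fin k, Function.Surjective c ∧ ∀ i j, c₀ i < c₀ j → c i < c j)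
  | 0, h, hhd => by
    intro c₀ hb hsurj
    obtain rfl : h = k := by omega
    refine ⟨fun i => ⟨c₀ i, hb i⟩, ?_, ?_⟩
    · intro v
      obtain ⟨i, hi⟩ := hsurj (v : ℕ) v.isLt
      exact ⟨i, Fin.ext hi⟩
    · intro i j hij
      exact hij
  | d + 1, h, hhd => by
    intro c₀ hb hsurj
    have hn : 1 ≤ n := by omega
    have hh1 : 1 ≤ h := by
      by_contra h0
      have := hb ⟨0, hn⟩
      omega
    have hhn : h < n := by omega
    -- pigeonhole: two indices with the same value
    have hcard : Fintype.card (Fin h) < Fintype.card (Fin n) := by simpa using hhn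
    obtain ⟨x, y, hxy, hval⟩ := Fintype.exists_ne_map_eq_of_card_lt
      (fun i : Fin n => (⟨c₀ i, hb i⟩ : Fin h)) hcard
    obtain ⟨v, hvx, hvy⟩ : ∃ v, c₀ x = v ∧ c₀ y = v :=
      ⟨c₀ x, rfl, (congrArg Fin.val hval).symm⟩
    have hc₁ : ∃ c₁ : Fin n → ℕ, ∀ i, c₁ i =
        if c₀ i < v then c₀ i else if c₀ i = v then (if i = x then v + 1 else v)
        else c₀ i + 1 := ⟨_, fun _ => rfl⟩
    obtain ⟨c₁, hc₁⟩ := hc₁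
    have hvh : v < h := hvx ▸ hb x
    have hb₁ : ∀ i, c₁ i < h + 1 := by
      intro i
      have := hb i
      rw [hc₁ i]
      split_ifs <;> omega
    have hsurj₁ : ∀ u < h + 1, ∃ i, c₁ i = u := by
      intro u hu
      rcases lt_trichotomy u v with h1 | h1 | h1
      · obtain ⟨i, hi⟩ := hsurj u (by omega)
        exact ⟨i, by rw [hc₁ i, if_pos (by omega)]; exact hi⟩
      · refine ⟨y, ?_⟩
        rw [hc₁ y, if_neg (by omega), if_pos (by omega), if_neg (Ne.symm hxy)]
        omega
      · rcases Nat.eq_or_lt_of_le h1 with h2 | h2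
        · refine ⟨x, ?_⟩
          rw [hc₁ x, if_neg (by omega), if_pos (by omega), if_pos rfl]
          omega
        · obtain ⟨i, hi⟩ := hsurj (u - 1) (by omega)
          refine ⟨i, ?_⟩
          rw [hc₁ i, if_neg (by omega), if_neg (by omega)]
          omega
    have hmono : ∀ i j, c₀ i < c₀ j → c₁ i < c₁ j := by
      intro i j hij
      rw [hc₁ i, hc₁ j]
      split_ifs <;> omega
    obtain ⟨c, hcs, hcm⟩ := refine hkn d (h + 1) (by omega) c₁ hb₁
      (fun u hu => hsurj₁ u hu)
    exact ⟨c, hcs, fun i j hij => hcm i j (hmono i j hij)⟩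

/-- Every nilpotent subsemigroup of class ≤ k is contained in `Tc c` for a surjection `c`. -/
lemma exists_surj_Tc {n k : ℕ} (hn : 1 ≤ n) (hk : 1 ≤ k) (hkn : k ≤ n)
    {T : Set (Matrix (Fin n) (Fin n) ℝ)}
    (hT : NilLe (0 : Matrix (Fin n) (Fin n) ℝ) (Omega n) k T) :
    ∃ c : Fin n → Fin k, Function.Surjective c ∧ T ⊆ Tc c := by
  haveI : Nonempty (Fin n) := ⟨⟨0, hn⟩⟩
  obtain ⟨m, hm0, hmk, hmp⟩ := exists_prodEq_min hT
  have hΩ : T ⊆ Omega n := hT.1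
  have hs : IsSubsg T := hT.2.1.1
  set wf := rel_wf hΩ hs hm0 hmp with hwf
  set c₀ : Fin n → ℕ := heightFn wf with hc₀
  have hbm : ∀ i, c₀ i < m := heightFn_bound hn hΩ hs hm0 hmp
  -- h := sup + 1
  obtain ⟨i₀, -, hi₀⟩ := Finset.exists_mem_eq_sup Finset.univ Finset.univ_nonempty c₀
  set h : ℕ := c₀ i₀ + 1 with hh
  have hb : ∀ i, c₀ i < h := by
    intro i
    have := Finset.le_sup (f := c₀) (Finset.mem_univ i)
    omega
  have hdc : ∀ v < h, ∃ i, c₀ i = v := by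
    intro v hv
    rcases Nat.lt_succ_iff_lt_or_eq.mp hv with hv' | rfl
    · exact heightFn_downward wf (c₀ i₀) i₀ rfl v hv'
    · exact ⟨i₀, rfl⟩
  have hhk : h ≤ k := by
    have := hbm i₀
    omega
  obtain ⟨c, hcs, hcm⟩ := refine hkn (k - h) h (by omega) c₀ hb hdc
  refine ⟨c, hcs, fun A hA => ⟨hΩ hA, fun i j hij => ?_⟩⟩
  exact hcm i j (heightFn_lt wf ⟨A, hA, hij⟩)
/-- Two surjections inducing the same comparison relation are equal. -/
lemma surj_eq_of_lt_iff {n k : ℕ} {c c' : Fin n → Fin k}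
    (hc : Function.Surjective c) (hc' : Function.Surjective c')
    (hiff : ∀ i j, c i < c j ↔ c' i < c' j) : c = c' := by
  have key : ∀ (m : ℕ) (i : Fin n), (c i : ℕ) = m → (c' i : ℕ) = m := by
    intro m
    induction m using Nat.strong_induction_on with
    | _ m ih =>
      intro i hi
      have hub : m ≤ (c' i : ℕ) := by
        rcases Nat.eq_zero_or_pos m with rfl | hm
        · omega
        · obtain ⟨j, hj⟩ := hc ⟨m - 1, by omega⟩
          have hj' : (c j : ℕ) = m - 1 := by rw [hj]
          have hlt : c' j < c' i := (hiff j i).mp (by rw [Fin.lt_def]; omega)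
          have := ih (m - 1) (by omega) j hj'
          rw [Fin.lt_def] at hlt
          omega
      by_contra hne
      have hmk : m < k := by omega
      obtain ⟨j, hj⟩ := hc' ⟨m, hmk⟩
      have hj' : (c' j : ℕ) = m := by rw [hj]
      have hlt : c j < c i := (hiff j i).mpr (by rw [Fin.lt_def]; omega)
      rw [Fin.lt_def] at hlt
      have := ih (c j : ℕ) (by omega) j rfl
      omega
  funext i
  exact Fin.ext (key (c i : ℕ) i rfl).symm

lemma lt_iff_of_Tc_eq {n k : ℕ} {c c' : Fin n → Fin k} (h : Tc c = Tc c') :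
    ∀ i j, c i < c j ↔ c' i < c' j := by
  intro i j
  constructor
  · intro hlt
    have := h ▸ Ee_mem_Tc hlt
    exact this.2 i j (by rw [Ee_apply_same]; norm_num)
  · intro hlt
    have := h.symm ▸ Ee_mem_Tc hlt
    exact this.2 i j (by rw [Ee_apply_same]; norm_num)
/-- Counting surjections `Fin n → Fin k` by inclusion–exclusion. -/
lemma card_surjections (n k : ℕ) (hn : 1 ≤ n) :
    (Nat.card {c : Fin n → Fin k // Function.Surjective c} : ℤ) =
      ∑ i ∈ Finset.range k, (-1 : ℤ) ^ i * (k.choose i : ℤ) * ((k - i : ℕ) : ℤ) ^ n := by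
  classical
  set S : Fin k → Finset (Fin n → Fin k) :=
    fun v => Finset.univ.filter (fun f => ∀ i, f i ≠ v) with hS
  have h1 : Finset.univ.filter (fun f : Fin n → Fin k => Function.Surjective f) =
      (Finset.univ : Finset (Fin k)).inf (fun v => (S v)ᶜ) := by
    ext f
    simp only [Finset.mem_filter, Finset.mem_univ, true_and, Finset.mem_inf,
      Finset.mem_compl, hS, not_forall, not_not]
    constructor
    · intro hf v _
      obtain ⟨i, hi⟩ := hf v
      exact ⟨i, hi⟩
    · intro hf v
      obtain ⟨i, hi⟩ := hf v trivial
      exact ⟨i, hi⟩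
  have h2 : ∀ t : Finset (Fin k), ((t.inf S).card : ℤ) = ((k - t.card : ℕ) : ℤ) ^ n := by
    intro t
    have : t.inf S = Fintype.piFinset (fun _ : Fin n => tᶜ) := by
      ext f
      simp only [Finset.mem_inf, hS, Finset.mem_filter, Finset.mem_univ, true_and,
        Fintype.mem_piFinset, Finset.mem_compl]
      constructor
      · intro hf i hfi
        exact hf (f i) hfi i rfl
      · intro hf v hv i hfi
        exact hf i (hfi ▸ hv)
    rw [this, Fintype.card_piFinset]
    simp [Finset.card_compl]
  have hcard : Nat.card {c : Fin n → Fin k // Function.Surjective c} =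
      (Finset.univ.filter (fun f : Fin n → Fin k => Function.Surjective f)).card := by
    rw [Nat.card_eq_fintype_card, Fintype.card_subtype]
  rw [hcard, h1]
  rw [Finset.inclusion_exclusion_card_inf_compl (Finset.univ : Finset (Fin k)) S]
  have h3 : ∀ t ∈ (Finset.univ : Finset (Fin k)).powerset,
      (-1 : ℤ) ^ t.card * ((t.inf S).card : ℤ) =
      (-1 : ℤ) ^ t.card * ((k - t.card : ℕ) : ℤ) ^ n := by
    intro t _
    rw [h2]
  rw [Finset.sum_congr rfl h3, Finset.sum_powerset]
  have h4 : ∀ j ∈ Finset.range ((Finset.univ : Finset (Fin k)).card + 1),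
      ∑ t ∈ Finset.powersetCard j (Finset.univ : Finset (Fin k)),
        (-1 : ℤ) ^ t.card * ((k - t.card : ℕ) : ℤ) ^ n =
      (-1 : ℤ) ^ j * (k.choose j : ℤ) * ((k - j : ℕ) : ℤ) ^ n := by
    intro j _
    rw [Finset.sum_congr rfl (fun t ht => by
      rw [(Finset.mem_powersetCard.mp ht).2])]
    rw [Finset.sum_const, Finset.card_powersetCard]
    simp [Finset.card_univ, mul_assoc]
    ring
  rw [Finset.sum_congr rfl h4]
  have h5 : (Finset.univ : Finset (Fin k)).card = k := by simp
  rw [h5, Finset.sum_range_succ]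
  have h6 : ((k - k : ℕ) : ℤ) ^ n = 0 := by
    rw [Nat.sub_self]
    push_cast
    exact zero_pow (by omega)
  rw [h6]
  ring

/-- The map sending an ordered decomposition of `{1,…,n}` into `k`
pairwise disjoint nonempty blocks (encoded by a surjection `c : Fin n → Fin k`)
to `T_c = {A ∈ Ω_n : A i j ≠ 0 → c i < c j}` is a bijection onto the set of
maximal elements of `Nil_k(Ω_n)`; in particular the number of maximal elements of
`Nil_k(Ω_n)` equals `∑_{i=0}^{k-1} (-1)^i C(k,i) (k-i)^n`. -/
theorem stmt7 (n k : ℕ) (hn : 1 ≤ n) (hk1 : 1 ≤ k) (hkn : k < n) :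
    Set.BijOn
        (fun c : Fin n → Fin k =>
          {A | A ∈ Omega n ∧ ∀ i j, A i j ≠ 0 → c i < c j})
        {c | Function.Surjective c}
        {T | Maximal (NilLe (0 : Matrix (Fin n) (Fin n) ℝ) (Omega n) k) T} ∧
      (Nat.card {T : Set (Matrix (Fin n) (Fin n) ℝ) //
          Maximal (NilLe (0 : Matrix (Fin n) (Fin n) ℝ) (Omega n) k) T} : ℤ) =
        ∑ i ∈ Finset.range k, (-1 : ℤ) ^ i * (k.choose i : ℤ) * ((k - i : ℕ) : ℤ) ^ n := by
  have hbij : Set.BijOn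
      (fun c : Fin n → Fin k => Tc c)
      {c | Function.Surjective c}
      {T | Maximal (NilLe (0 : Matrix (Fin n) (Fin n) ℝ) (Omega n) k) T} := by
    refine ⟨?_, ?_, ?_⟩
    · intro c hc
      refine ⟨Tc_nilLe hk1 c, fun T' hT' hsub => ?_⟩
      exact subset_Tc_of_superset hk1 hc hT' hsub
    · intro c hc c' hc' heq
      exact surj_eq_of_lt_iff hc hc' (lt_iff_of_Tc_eq heq)
    · intro T hT
      obtain ⟨c, hcs, hsub⟩ := exists_surj_Tc hn hk1 (le_of_lt hkn) hT.prop
      have hback : Tc c ⊆ T := hT.2 (Tc_nilLe hk1 c) hsub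
      exact ⟨c, hcs, subset_antisymm hback hsub⟩
  refine ⟨hbij, ?_⟩
  have hcardeq : Nat.card {T : Set (Matrix (Fin n) (Fin n) ℝ) //
      Maximal (NilLe (0 : Matrix (Fin n) (Fin n) ℝ) (Omega n) k) T} =
      Nat.card {c : Fin n → Fin k // Function.Surjective c} :=
    Nat.card_congr (Set.BijOn.equiv _ hbij).symm
  rw [hcardeq]
  exact card_surjections n k hn

end NilSg
end

section
/- Let n ≥ 1 and let A be an n×n real matrix with nonnegative entries. Then A has a multiplicative inverse whose entries are all nonnegative if and only if A is a monomial matrix over the positive reals, i.e. there exist a permutation σ of {1,…,n} and positive real numbers d_1,…,d_n such that a_{i,j} = d_i if j = σ(i) and a_{i,j} = 0 otherwise. In other words, the group of invertible elements of the semigroup Ω_n coincides with the complete monomial group of degree n over the multiplicative group of positive real numbers. -/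
namespace NilSg

variable {M : Type*}

/-- An `n × n` real matrix with nonnegative entries has a
multiplicative inverse with nonnegative entries iff it is a monomial matrix over
the positive reals. -/
theorem stmt9 (n : ℕ) (hn : 1 ≤ n) (A : Matrix (Fin n) (Fin n) ℝ)
    (hA : ∀ i j, 0 ≤ A i j) :
    (∃ B : Matrix (Fin n) (Fin n) ℝ, (∀ i j, 0 ≤ B i j) ∧ A * B = 1 ∧ B * A = 1) ↔
      ∃ (σ : Equiv.Perm (Fin n)) (d : Fin n → ℝ), (∀ i, 0 < d i) ∧
        ∀ i j, A i j = if j = σ i then d i else 0 := by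
  constructor
  · rintro ⟨B, hB, hAB, hBA⟩
    have hAB' : ∀ i j, ∑ k, A i k * B k j = if i = j then 1 else 0 := by
      intro i j
      have := congrFun (congrFun hAB i) j
      simpa [Matrix.mul_apply, Matrix.one_apply] using this
    have hBA' : ∀ i j, ∑ k, B i k * A k j = if i = j then 1 else 0 := by
      intro i j
      have := congrFun (congrFun hBA i) j
      simpa [Matrix.mul_apply, Matrix.one_apply] using this
    have L1 : ∀ i j, 0 < A i j → ∀ m, m ≠ i → B j m = 0 := by
      intro i j hij m hm
      have hsum : ∑ k, A i k * B k m = 0 := by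
        have := hAB' i m
        simpa [Ne.symm hm] using this
      have hnn : ∀ k ∈ Finset.univ, 0 ≤ A i k * B k m :=
        fun k _ => mul_nonneg (hA i k) (hB k m)
      have hterm := (Finset.sum_eq_zero_iff_of_nonneg hnn).mp hsum j (Finset.mem_univ j)
      rcases mul_eq_zero.mp hterm with h | h
      · exact absurd h (ne_of_gt hij)
      · exact h
    have L2 : ∀ i j, 0 < A i j → ∀ j', ∑ k, B j k * A k j' = B j i * A i j' := by
      intro i j hij j'
      apply Finset.sum_eq_single i
      · intro m _ hm
        rw [L1 i j hij m hm, zero_mul]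
      · intro h; exact absurd (Finset.mem_univ i) h
    have hBpos : ∀ i j, 0 < A i j → 0 < B j i := by
      intro i j hij
      have h1 : B j i * A i j = 1 := by
        have := hBA' j j; rw [L2 i j hij j] at this; simpa using this
      nlinarith [hB j i]
    have uniq : ∀ i j, 0 < A i j → ∀ j', j' ≠ j → A i j' = 0 := by
      intro i j hij j' hne
      have h0 : B j i * A i j' = 0 := by
        have := hBA' j j'; rw [L2 i j hij j'] at this
        simpa [Ne.symm hne] using this
      rcases mul_eq_zero.mp h0 with h | h
      · exact absurd h (ne_of_gt (hBpos i j hij))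
      · exact h
    have hex : ∀ i, ∃ j, 0 < A i j := by
      intro i
      by_contra h
      push_neg at h
      have hz : ∀ j, A i j = 0 := fun j => le_antisymm (h j) (hA i j)
      have := hAB' i i
      simp [hz] at this
    choose σ0 hσ0 using hex
    have hinj : Function.Injective σ0 := by
      intro i i' h
      by_contra hne
      have hBz : ∀ m, B (σ0 i) m = 0 := by
        intro m
        rcases eq_or_ne m i with rfl | hm
        · rw [h]; exact L1 i' (σ0 i') (hσ0 i') m hne
        · exact L1 i (σ0 i) (hσ0 i) m hm
      have := hBA' (σ0 i) (σ0 i)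
      simp [hBz] at this
    refine ⟨Equiv.ofBijective σ0 (Finite.injective_iff_bijective.mp hinj),
      fun i => A i (σ0 i), fun i => hσ0 i, ?_⟩
    intro i j
    show A i j = if j = σ0 i then A i (σ0 i) else 0
    by_cases hj : j = σ0 i
    · subst hj; simp
    · rw [uniq i (σ0 i) (hσ0 i) j hj]; simp [hj]
  · rintro ⟨σ, d, hd, hAd⟩
    refine ⟨Matrix.of fun k i => if k = σ i then (d i)⁻¹ else 0, ?_, ?_, ?_⟩
    · intro i j
      dsimp only [Matrix.of_apply]
      split
      · exact inv_nonneg.mpr (hd j).le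
      · exact le_refl 0
    · ext i j
      rw [Matrix.mul_apply, Matrix.one_apply]
      rw [Finset.sum_eq_single (σ i)]
      · by_cases h : i = j
        · subst h
          simp [hAd, Matrix.of_apply, (hd i).ne']
        · have hσ : σ i ≠ σ j := fun hc => h (σ.injective hc)
          simp [hAd, Matrix.of_apply, hσ, h]
      · intro k _ hk
        rw [hAd]
        simp [hk]
      · simp
    · ext k j
      rw [Matrix.mul_apply, Matrix.one_apply]
      rw [Finset.sum_eq_single (σ.symm k)]
      · by_cases h : k = j
        · subst h
          simp [hAd, Matrix.of_apply, Equiv.apply_symm_apply,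
            (hd (σ.symm k)).ne']
        · have hj : j ≠ k := Ne.symm h
          simp [hAd, Matrix.of_apply, Equiv.apply_symm_apply, hj, h]
      · intro m _ hm
        have : k ≠ σ m := fun hc => hm (by rw [hc, Equiv.symm_apply_apply])
        simp [Matrix.of_apply, this]
      · simp


end NilSg
end

section
/- Let n ≥ 1. The multiplicative semigroup Q_n of all n×n real matrices each of whose row sums and column sums equals 1 is isomorphic, as a semigroup, to the multiplicative semigroup M_{n-1}(ℝ) of all (n-1)×(n-1) real matrices. -/
/-!
A matrix `A ∈ Q_n` fixes the all-ones vector `𝟙` and, since `𝟙ᵀ A = 𝟙ᵀ`, maps the hyperplane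
`V = {x | ∑ xᵢ = 0}` into itself. As `ℝⁿ = V ⊕ ℝ𝟙`, the restriction `A ↦ A|_V` is a
multiplicative bijection from `Q_n` onto `End V ≅ M_{n-1}(ℝ)`. In the basis `eⱼ - eₙ` of `V`
the matrix of `A|_V` is `(A i j - A i n)_{i,j<n}`; its inverse is explicit because a row of
`A` is recovered from the differences `A i j - A i n` and the row sum `1`, and the last row
from the column sums.
-/

namespace NilSg

variable {M : Type*}

open Matrix

variable {m : ℕ} {R : Type*} [Ring R]

def sumZeroRestrict (A : Matrix (Fin (m + 1)) (Fin (m + 1)) R) :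
    Matrix (Fin m) (Fin m) R :=
  of fun i j => A i.castSucc j.castSucc - A i.castSucc (Fin.last m)

theorem sumZeroRestrict_apply (A : Matrix (Fin (m + 1)) (Fin (m + 1)) R)
    (i j : Fin m) : sumZeroRestrict A i j = A i.castSucc j.castSucc - A i.castSucc (Fin.last m) :=
  rfl

theorem sumZeroRestrict_mul (A B : Matrix (Fin (m + 1)) (Fin (m + 1)) R)
    {c : R} (hB : ∀ j, ∑ i, B i j = c) :
    sumZeroRestrict (A * B) = sumZeroRestrict A * sumZeroRestrict B := by
  ext i j
  have hcol : ∑ k : Fin (m + 1), (B k j.castSucc - B k (Fin.last m)) = 0 := by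
    rw [Finset.sum_sub_distrib, hB, hB, sub_self]
  rw [Fin.sum_univ_castSucc, add_eq_zero_iff_eq_neg'] at hcol
  simp only [sumZeroRestrict_apply, mul_apply, ← Finset.sum_sub_distrib, ← mul_sub]
  rw [Fin.sum_univ_castSucc, hcol]
  simp only [mul_neg, Finset.mul_sum, ← Finset.sum_neg_distrib, ← Finset.sum_add_distrib, mul_sub,
    sub_mul]
  exact Finset.sum_congr rfl fun k _ => by abel

def completeLastRow (U : Fin m → Fin (m + 1) → ℝ) : Matrix (Fin (m + 1)) (Fin (m + 1)) ℝ :=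
  Fin.snoc (α := fun _ => Fin (m + 1) → ℝ) U fun j => 1 - ∑ i, U i j

@[simp]
theorem completeLastRow_castSucc (U : Fin m → Fin (m + 1) → ℝ) (i : Fin m) :
    completeLastRow U i.castSucc = U i :=
  Fin.snoc_castSucc ..

@[simp]
theorem completeLastRow_last (U : Fin m → Fin (m + 1) → ℝ) (j : Fin (m + 1)) :
    completeLastRow U (Fin.last m) j = 1 - ∑ i, U i j := by
  simp [completeLastRow]

/-- Double counting: once the other rows and all columns sum to `1`, so does the last row. -/
theorem completeLastRow_mem_Qset {U : Fin m → Fin (m + 1) → ℝ} (hU : ∀ i, ∑ j, U i j = 1) :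
    completeLastRow U ∈ Qset (m + 1) := by
  refine ⟨fun i => ?_, fun j => by simp [Fin.sum_univ_castSucc]⟩
  induction i using Fin.lastCases with
  | cast i => simpa using hU i
  | last =>
    simp only [completeLastRow_last, Finset.sum_sub_distrib]
    rw [Finset.sum_comm]
    simp [hU]

theorem completeLastRow_eq {A : Matrix (Fin (m + 1)) (Fin (m + 1)) ℝ}
    (hA : ∀ j, ∑ i, A i j = 1) : completeLastRow (fun i => A i.castSucc) = A := by
  ext i j
  induction i using Fin.lastCases with
  | cast i => simp
  | last =>
    have := hA j
    rw [Fin.sum_univ_castSucc] at this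
    simp only [completeLastRow_last]
    linarith

/-- The entry `t = A i (last m)` forced by `B i j = A i j - t` and the row sum `1`. -/
noncomputable def liftLastEntry (B : Matrix (Fin m) (Fin m) ℝ) (i : Fin m) : ℝ :=
  (1 - ∑ j, B i j) / (m + 1)

noncomputable def liftRow (B : Matrix (Fin m) (Fin m) ℝ) (i : Fin m) : Fin (m + 1) → ℝ :=
  Fin.snoc (fun j => B i j + liftLastEntry B i) (liftLastEntry B i)

theorem sum_liftRow (B : Matrix (Fin m) (Fin m) ℝ) (i : Fin m) : ∑ j, liftRow B i j = 1 := by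
  simp only [liftRow, Fin.sum_univ_castSucc, Fin.snoc_castSucc, Fin.snoc_last,
    Finset.sum_add_distrib, Finset.sum_const, Finset.card_univ, Fintype.card_fin, nsmul_eq_mul,
    liftLastEntry]
  field_simp
  ring

theorem liftRow_sumZeroRestrict {A : Matrix (Fin (m + 1)) (Fin (m + 1)) ℝ}
    (hA : ∀ i, ∑ j, A i j = 1) (i : Fin m) : liftRow (sumZeroRestrict A) i = A i.castSucc := by
  have hrow := hA i.castSucc
  rw [Fin.sum_univ_castSucc] at hrow
  have hlast : liftLastEntry (sumZeroRestrict A) i = A i.castSucc (Fin.last m) := by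
    simp only [liftLastEntry, sumZeroRestrict_apply, Finset.sum_sub_distrib,
      Finset.sum_const, Finset.card_univ, Fintype.card_fin, nsmul_eq_mul]
    field_simp
    linarith
  ext j
  induction j using Fin.lastCases with
  | cast j => simp [liftRow, hlast, sumZeroRestrict_apply]
  | last => simp [liftRow, hlast]

noncomputable def liftMatrix (B : Matrix (Fin m) (Fin m) ℝ) :
    Matrix (Fin (m + 1)) (Fin (m + 1)) ℝ :=
  completeLastRow (liftRow B)

theorem liftMatrix_mem_Qset (B : Matrix (Fin m) (Fin m) ℝ) : liftMatrix B ∈ Qset (m + 1) :=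
  completeLastRow_mem_Qset (sum_liftRow B)

theorem sumZeroRestrict_liftMatrix (B : Matrix (Fin m) (Fin m) ℝ) :
    sumZeroRestrict (liftMatrix B) = B := by
  ext i j
  simp [sumZeroRestrict_apply, liftMatrix, liftRow]

theorem liftMatrix_sumZeroRestrict {A : Matrix (Fin (m + 1)) (Fin (m + 1)) ℝ}
    (hA : A ∈ Qset (m + 1)) : liftMatrix (sumZeroRestrict A) = A := by
  rw [liftMatrix, funext (liftRow_sumZeroRestrict hA.1), completeLastRow_eq hA.2]

/-- The multiplicative semigroup `Q_n` of all `n × n` real matrices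
whose row and column sums all equal `1` is isomorphic, as a semigroup, to the
multiplicative semigroup of all `(n-1) × (n-1)` real matrices. -/
theorem stmt11 (n : ℕ) (hn : 1 ≤ n) :
    ∃ f : Matrix (Fin n) (Fin n) ℝ → Matrix (Fin (n - 1)) (Fin (n - 1)) ℝ,
      Set.BijOn f (Qset n) Set.univ ∧
        ∀ A ∈ Qset n, ∀ B ∈ Qset n, f (A * B) = f A * f B := by
  obtain ⟨m, rfl⟩ := Nat.exists_eq_add_of_le' hn
  refine ⟨sumZeroRestrict, ?_, fun A _ B hB => sumZeroRestrict_mul A B hB.2⟩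
  have hinv : Set.InvOn liftMatrix sumZeroRestrict (Qset (m + 1)) Set.univ :=
    ⟨fun A hA => liftMatrix_sumZeroRestrict hA, fun B _ => sumZeroRestrict_liftMatrix B⟩
  exact hinv.bijOn (Set.mapsTo_univ _ _) fun B _ => liftMatrix_mem_Qset B

end NilSg
end

section
/- Let n ≥ 2 and 1 ≤ k ≤ n-1. The map sending a flag 0 = V_0 ⊊ V_1 ⊊ ⋯ ⊊ V_k = V of length k in V to the set T = {A ∈ Q_n : A·V_i ⊆ V_{i-1} for all i = 1,…,k} is a bijection from the set of flags of length k in V onto the set of maximal elements of Nil_k(Q_n). -/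
namespace NilSg

variable {M : Type*}

/-!
Every `A ∈ Q_n` fixes `1` and maps `V` into itself, `O_n` kills `V`, and conversely every linear
map `f` with `f 1 = 0` and range in `V` agrees on `V` with some element of `Q_n` (namely
`O_n + f`): on `V`, `Q_n` is the full endomorphism monoid of `V`, with `O_n` acting as `0`.

If `T ∈ Nil_k`, the kernel chain `K_j = {x ∈ V | P x = 0 for all P ∈ T^j}` satisfies
`T K_{j+1} ⊆ K_j` and `K_k = V`; dropping repetitions and refining, which is possible since
`k ≤ dim V = n - 1`, gives a flag of length `k` whose semigroup `T_V` contains `T`.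
For a flag `V`, rank-one elements of `T_V` send any vector outside `V_i` to any vector of `V_i`,
so `K_j(T_V) = V_j`: this recovers `V` from `T_V`. They also show that every vector of `V_j` is
`P y` with `P ∈ T_V^{k-j}`, so any `T ⊇ T_V` in `Nil_k` has `V_j ⊆ K_j(T) ⊆ K_j(T_V) = V_j`, and
then `T ⊆ T_V`: each `T_V` is maximal.
-/

open Matrix Module
open scoped Pointwise SetRel

section Monoid

variable {M : Type*} [Monoid M] {T : Set M}

lemma foldl_mul_mem_pow {a : M} {m : ℕ} (ha : a ∈ T ^ m) {l : List M} (hl : ∀ x ∈ l, x ∈ T) :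
    l.foldl (· * ·) a ∈ T ^ (m + l.length) := by
  induction l generalizing a m with
  | nil => simpa using ha
  | cons x l ih =>
    rw [List.foldl_cons, List.length_cons, ← add_assoc, add_right_comm]
    exact ih (pow_succ T m ▸ Set.mul_mem_mul ha (hl x List.mem_cons_self))
      fun y hy => hl y (List.mem_cons_of_mem x hy)

lemma exists_foldl_mul_eq_of_mem_pow {m : ℕ} {b : M} (hb : b ∈ T ^ (m + 1)) :
    ∃ a ∈ T, ∃ l : List M, (∀ x ∈ l, x ∈ T) ∧ l.length = m ∧ l.foldl (· * ·) a = b := by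
  induction m generalizing b with
  | zero => exact ⟨b, by simpa using hb, [], by simp, rfl, rfl⟩
  | succ m ih =>
    rw [pow_succ] at hb
    obtain ⟨c, hc, x, hx, rfl⟩ := hb
    obtain ⟨a, ha, l, hl, rfl, rfl⟩ := ih hc
    refine ⟨a, ha, l ++ [x], ?_, by simp, by simp⟩
    simpa [or_imp, forall_and] using ⟨hl, hx⟩

lemma prodEq_succ_iff {z : M} {m : ℕ} : ProdEq z T (m + 1) ↔ T ^ (m + 1) ⊆ {z} := by
  refine ⟨fun h b hb => ?_, fun h a l ha hl hlen => h ?_⟩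
  · obtain ⟨a, ha, l, hl, hlen, rfl⟩ := exists_foldl_mul_eq_of_mem_pow hb
    exact h a l ha hl (by rw [hlen])
  · simpa [← hlen, add_comm] using foldl_mul_mem_pow (m := 1) (by simpa using ha) hl

end Monoid

lemma _root_.RelSeries.head_insertNth {α : Type*} {r : SetRel α α} (p : RelSeries r)
    (i : Fin p.length) (a : α) (h₁ : p i.castSucc ~[r] a) (h₂ : a ~[r] p i.succ) :
    (p.insertNth i a h₁ h₂).head = p.head := by
  change Fin.insertNth (α := fun _ => α) i.succ.castSucc a p 0 = p 0
  rw [Fin.insertNth_apply_below (Fin.castSucc_pos i.succ_pos)]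
  simp

lemma _root_.RelSeries.last_insertNth {α : Type*} {r : SetRel α α} (p : RelSeries r)
    (i : Fin p.length) (a : α) (h₁ : p i.castSucc ~[r] a) (h₂ : a ~[r] p i.succ) :
    (p.insertNth i a h₁ h₂).last = p.last := by
  change Fin.insertNth (α := fun _ => α) i.succ.castSucc a p (Fin.last _) = p (Fin.last _)
  rw [Fin.insertNth_apply_above (Fin.castSucc_lt_last i.succ)]
  simp [Fin.pred_last]

lemma _root_.Submodule.exists_lt_lt_of_finrank_add_one_lt {K W : Type*} [DivisionRing K]
    [AddCommGroup W] [Module K W] [FiniteDimensional K W] {a b : Submodule K W} (hab : a ≤ b)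
    (h : finrank K a + 1 < finrank K b) : ∃ X, a < X ∧ X < b := by
  obtain ⟨v, hvb, hva⟩ := SetLike.exists_of_lt (lt_of_le_of_ne hab (by rintro rfl; omega))
  have hv : v ≠ 0 := fun h => hva (h ▸ a.zero_mem)
  refine ⟨(K ∙ v) ⊔ a, (Submodule.covBy_span_singleton_sup hva).lt,
    lt_of_le_of_ne (sup_le ((Submodule.span_singleton_le_iff_mem v b).2 hvb) hab) fun he => ?_⟩
  have := Submodule.finrank_add_le_finrank_add_finrank (K ∙ v) a
  rw [he, finrank_span_singleton hv] at this
  omega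

variable {n : ℕ}

lemma mem_Vsub {x : Fin n → ℝ} : x ∈ Vsub n ↔ ∑ i, x i = 0 := Iff.rfl

lemma one_mem_Qset : (1 : Matrix (Fin n) (Fin n) ℝ) ∈ Qset n := by
  constructor <;> intro i <;> simp [Matrix.one_apply]

lemma mul_mem_Qset {A B : Matrix (Fin n) (Fin n) ℝ} (hA : A ∈ Qset n) (hB : B ∈ Qset n) :
    A * B ∈ Qset n := by
  constructor
  · intro i
    simp only [mul_apply]
    rw [Finset.sum_comm]
    simp [← Finset.mul_sum, hB.1, hA.1 i]
  · intro j
    simp only [mul_apply]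
    rw [Finset.sum_comm]
    simp [← Finset.sum_mul, hA.2, hB.2 j]

lemma pow_subset_Qset {T : Set (Matrix (Fin n) (Fin n) ℝ)} (hT : T ⊆ Qset n) (j : ℕ) :
    T ^ j ⊆ Qset n := by
  induction j with
  | zero => simpa using one_mem_Qset
  | succ j ih =>
    rw [pow_succ]
    rintro _ ⟨A, hA, B, hB, rfl⟩
    exact mul_mem_Qset (ih hA) (hT hB)

lemma mulVec_mem_Vsub {A : Matrix (Fin n) (Fin n) ℝ} (hA : A ∈ Qset n) {x : Fin n → ℝ}
    (hx : x ∈ Vsub n) : A *ᵥ x ∈ Vsub n := by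
  rw [mem_Vsub] at *
  simp only [mulVec, dotProduct]
  rw [Finset.sum_comm]
  simp [← Finset.sum_mul, hA.2, hx]

lemma On_mem_Qset : On n ∈ Qset n := by
  have h (i : Fin n) : ∑ _j : Fin n, (n : ℝ)⁻¹ = 1 := by simp [Nat.cast_ne_zero.2 i.pos.ne']
  exact ⟨h, h⟩

lemma On_mulVec_eq_zero {x : Fin n → ℝ} (hx : x ∈ Vsub n) : On n *ᵥ x = 0 := by
  ext i
  simp [On, mulVec, dotProduct, ← Finset.mul_sum, mem_Vsub.1 hx]

lemma mul_On {A : Matrix (Fin n) (Fin n) ℝ} (hA : A ∈ Qset n) : A * On n = On n := by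
  ext i j
  simp [mul_apply, On, ← Finset.sum_mul, hA.1 i]

lemma mulVec_one_of_mem_Qset {A : Matrix (Fin n) (Fin n) ℝ} (hA : A ∈ Qset n) :
    A *ᵥ 1 = 1 := by
  ext i
  simp [mulVec, dotProduct, hA.1 i]

lemma eq_On_of_mulVec_eq_zero {A : Matrix (Fin n) (Fin n) ℝ} (hA : A ∈ Qset n)
    (h : ∀ x ∈ Vsub n, A *ᵥ x = 0) : A = On n := by
  ext i j
  have hn : (n : ℝ) ≠ 0 := Nat.cast_ne_zero.2 j.pos.ne'
  -- `e_j - 1/n` lies in `V`, and `A` fixes `1`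
  have hx : Pi.single j 1 - (n : ℝ)⁻¹ • 1 ∈ Vsub n := by
    simp [mem_Vsub, Finset.sum_sub_distrib, hn]
  have := congrFun (h _ hx) i
  simp only [mulVec_sub, mulVec_smul, mulVec_one_of_mem_Qset hA, mulVec_single_one, Pi.sub_apply,
    Pi.smul_apply, Pi.one_apply, Pi.zero_apply, smul_eq_mul, mul_one, col_apply] at this
  simp [On, sub_eq_zero.1 this]

lemma isCompl_Vsub_span_one : IsCompl (Vsub n) (ℝ ∙ (1 : Fin n → ℝ)) := by
  constructor
  · rw [Submodule.disjoint_def]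
    intro x hx hx1
    obtain ⟨c, rfl⟩ := Submodule.mem_span_singleton.1 hx1
    ext i
    have hn : (n : ℝ) ≠ 0 := Nat.cast_ne_zero.2 i.pos.ne'
    simpa [mem_Vsub, hn] using hx
  · rw [codisjoint_iff, eq_top_iff]
    intro x _
    have hx : x - ((∑ i, x i) / n) • 1 ∈ Vsub n := by
      rcases Nat.eq_zero_or_pos n with rfl | hn
      · simp [mem_Vsub]
      · have hn' : (n : ℝ) ≠ 0 := Nat.cast_ne_zero.2 hn.ne'
        simp [mem_Vsub, Finset.sum_sub_distrib, mul_div_cancel₀ _ hn']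
    simpa using Submodule.add_mem_sup hx (Submodule.smul_mem _ ((∑ i, x i) / n)
      (Submodule.mem_span_singleton_self (1 : Fin n → ℝ)))

lemma finrank_Vsub_add_one (hn : 0 < n) : finrank ℝ (Vsub n) + 1 = n := by
  have h1 : (1 : Fin n → ℝ) ≠ 0 := fun h => one_ne_zero (congrFun h ⟨0, hn⟩)
  simpa [finrank_span_singleton h1] using
    Submodule.finrank_add_eq_of_isCompl (isCompl_Vsub_span_one (n := n))

lemma exists_mem_Qset_mulVec_eq (f : (Fin n → ℝ) →ₗ[ℝ] Fin n → ℝ) (hf1 : f 1 = 0)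
    (hf : LinearMap.range f ≤ Vsub n) : ∃ A ∈ Qset n, ∀ x ∈ Vsub n, A *ᵥ x = f x := by
  refine ⟨On n + LinearMap.toMatrix' f, ⟨fun i => ?_, fun j => ?_⟩, fun x hx => ?_⟩
  · have h := congrFun (LinearMap.toMatrix'_mulVec f 1) i
    simp only [hf1, mulVec, dotProduct, Pi.one_apply, mul_one, Pi.zero_apply] at h
    simp only [Matrix.add_apply, Finset.sum_add_distrib, h, On_mem_Qset.1 i, add_zero]
  · have h := mem_Vsub.1 (hf (LinearMap.mem_range_self f (Pi.single j 1)))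
    simp only [Matrix.add_apply, Finset.sum_add_distrib, LinearMap.toMatrix'_apply, h,
      On_mem_Qset.2 j, add_zero]
  · simp [add_mulVec, On_mulVec_eq_zero hx]

lemma pow_subset_On_of_nilLe {k : ℕ} {T : Set (Matrix (Fin n) (Fin n) ℝ)}
    (hT : NilLe (On n) (Qset n) k T) : T ^ k ⊆ {On n} := by
  obtain ⟨hTQ, ⟨-, c, hc, hTc⟩, hle⟩ := hT
  obtain ⟨hpos, hclass⟩ : 0 < nilClass (On n) T ∧ ProdEq (On n) T (nilClass (On n) T) :=
    Nat.sInf_mem (s := {k | 0 < k ∧ ProdEq (On n) T k}) ⟨c, hc, hTc⟩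
  obtain ⟨m, hm⟩ := Nat.exists_eq_add_one_of_ne_zero hpos.ne'
  rw [hm] at hclass hle
  rw [← Nat.sub_add_cancel hle, pow_add]
  rintro _ ⟨A, hA, B, hB, rfl⟩
  rw [Set.mem_singleton_iff.1 (prodEq_succ_iff.1 hclass hB)]
  exact mul_On (pow_subset_Qset hTQ _ hA)

section KerChain

variable {T T' : Set (Matrix (Fin n) (Fin n) ℝ)}

def kerChain (T : Set (Matrix (Fin n) (Fin n) ℝ)) (j : ℕ) : Submodule ℝ (Fin n → ℝ) :=
  Vsub n ⊓ ⨅ P ∈ T ^ j, LinearMap.ker P.mulVecLin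

lemma mem_kerChain {j : ℕ} {x : Fin n → ℝ} :
    x ∈ kerChain T j ↔ x ∈ Vsub n ∧ ∀ P ∈ T ^ j, P *ᵥ x = 0 := by
  simp [kerChain, Submodule.mem_iInf]

lemma kerChain_le_Vsub (j : ℕ) : kerChain T j ≤ Vsub n := inf_le_left

lemma kerChain_zero : kerChain T 0 = ⊥ :=
  eq_bot_iff.2 fun x hx => by simpa using (mem_kerChain.1 hx).2 1 rfl

lemma kerChain_antitone (h : T ⊆ T') (j : ℕ) : kerChain T' j ≤ kerChain T j :=
  fun _ hx => mem_kerChain.2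
    ⟨(mem_kerChain.1 hx).1, fun P hP => (mem_kerChain.1 hx).2 P (Set.pow_subset_pow_left h hP)⟩

lemma kerChain_mono : Monotone (kerChain T) := by
  refine monotone_nat_of_le_succ fun j x hx => mem_kerChain.2 ⟨(mem_kerChain.1 hx).1, ?_⟩
  rw [pow_succ']
  rintro _ ⟨A, -, P, hP, rfl⟩
  rw [← mulVec_mulVec, (mem_kerChain.1 hx).2 P hP, mulVec_zero]

lemma mulVec_mem_kerChain (hT : T ⊆ Qset n) {A : Matrix (Fin n) (Fin n) ℝ} (hA : A ∈ T)
    {j : ℕ} {x : Fin n → ℝ} (hx : x ∈ kerChain T (j + 1)) : A *ᵥ x ∈ kerChain T j := by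
  refine mem_kerChain.2 ⟨mulVec_mem_Vsub (hT hA) (mem_kerChain.1 hx).1, fun P hP => ?_⟩
  rw [mulVec_mulVec]
  exact (mem_kerChain.1 hx).2 _ (pow_succ T j ▸ Set.mul_mem_mul hP hA)

lemma mulVec_mem_kerChain_of_mem_pow (hT : T ⊆ Qset n) {j d : ℕ} (hTk : T ^ (j + d) ⊆ {On n})
    {P : Matrix (Fin n) (Fin n) ℝ} (hP : P ∈ T ^ d) {x : Fin n → ℝ} (hx : x ∈ Vsub n) :
    P *ᵥ x ∈ kerChain T j := by
  refine mem_kerChain.2 ⟨mulVec_mem_Vsub (pow_subset_Qset hT d hP) hx, fun Q hQ => ?_⟩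
  have hQP : Q * P ∈ T ^ (j + d) := pow_add T j d ▸ Set.mul_mem_mul hQ hP
  rw [mulVec_mulVec, Set.mem_singleton_iff.1 (hTk hQP), On_mulVec_eq_zero hx]

lemma kerChain_eq_Vsub {k : ℕ} (hTk : T ^ k ⊆ {On n}) : kerChain T k = Vsub n :=
  le_antisymm (kerChain_le_Vsub k) fun x hx => mem_kerChain.2
    ⟨hx, fun P hP => by rw [Set.mem_singleton_iff.1 (hTk hP), On_mulVec_eq_zero hx]⟩

end KerChain

section Flag

variable {k : ℕ}

structure IsFlag (n k : ℕ) (V : Fin (k + 1) → Submodule ℝ (Fin n → ℝ)) : Prop where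
  bot : V 0 = ⊥
  last : V (Fin.last k) = Vsub n
  strictMono : StrictMono V

def flagSemigroup (V : Fin (k + 1) → Submodule ℝ (Fin n → ℝ)) :
    Set (Matrix (Fin n) (Fin n) ℝ) :=
  {A | A ∈ Qset n ∧ ∀ i : Fin k, ∀ x ∈ V i.succ, A.mulVec x ∈ V i.castSucc}

variable {V W : Fin (k + 1) → Submodule ℝ (Fin n → ℝ)} (hV : IsFlag n k V)
include hV

lemma IsFlag.le_Vsub (i : Fin (k + 1)) : V i ≤ Vsub n :=
  hV.last ▸ hV.strictMono.monotone (Fin.le_last i)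

lemma IsFlag.mulVec_mem {A : Matrix (Fin n) (Fin n) ℝ} (hA : A ∈ flagSemigroup V)
    (i : Fin (k + 1)) {x : Fin n → ℝ} (hx : x ∈ V i) : A *ᵥ x ∈ V i := by
  cases i using Fin.cases with
  | zero =>
    rw [hV.bot, Submodule.mem_bot] at hx ⊢
    rw [hx, mulVec_zero]
  | succ i => exact hV.strictMono.monotone (Fin.castSucc_le_succ i) (hA.2 i x hx)

lemma IsFlag.isSubsg : IsSubsg (flagSemigroup V) := fun A hA B hB =>
  ⟨mul_mem_Qset hA.1 hB.1, fun i x hx => by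
    rw [← mulVec_mulVec]; exact hV.mulVec_mem hA _ (hB.2 i x hx)⟩

lemma IsFlag.pow_mulVec_eq_zero (i : Fin (k + 1)) {P : Matrix (Fin n) (Fin n) ℝ}
    (hP : P ∈ flagSemigroup V ^ (i : ℕ)) {x : Fin n → ℝ} (hx : x ∈ V i) : P *ᵥ x = 0 := by
  induction i using Fin.induction generalizing P x with
  | zero => simp [(by simpa [hV.bot] using hx : x = 0)]
  | succ i ih =>
    rw [Fin.val_succ, pow_succ] at hP
    obtain ⟨Q, hQ, A, hA, rfl⟩ := hP
    rw [← mulVec_mulVec]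
    exact ih hQ (hA.2 i x hx)

lemma IsFlag.exists_mulVec_eq (i : Fin (k + 1)) {x w : Fin n → ℝ} (hx : x ∈ Vsub n)
    (hxi : x ∉ V i) (hw : w ∈ V i) : ∃ A ∈ flagSemigroup V, A *ᵥ x = w := by
  have hx' : x ∉ V i ⊔ (ℝ ∙ 1) := fun h => hxi <| by
    have : (V i ⊔ (ℝ ∙ 1)) ⊓ Vsub n = V i := by
      rw [sup_inf_assoc_of_le _ (hV.le_Vsub i), inf_comm, isCompl_Vsub_span_one.inf_eq_bot,
        sup_bot_eq]
    exact this ▸ Submodule.mem_inf.2 ⟨h, hx⟩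
  obtain ⟨φ, hφx, hφ⟩ := Submodule.exists_dual_map_eq_bot_of_notMem hx' inferInstance
  have hφ0 : ∀ y ∈ V i ⊔ (ℝ ∙ 1), φ y = 0 := fun y hy => by
    simpa [hφ] using Submodule.mem_map_of_mem (f := φ) hy
  -- `A` acts on `V` as the rank-one map `y ↦ (φ y / φ x) • w`, where `φ` kills `V i` and `1`
  obtain ⟨A, hAQ, hA⟩ := exists_mem_Qset_mulVec_eq ((φ x)⁻¹ • φ.smulRight w)
    (by simp [hφ0 1 (Submodule.mem_sup_right (Submodule.mem_span_singleton_self 1))])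
    (by
      rintro _ ⟨y, rfl⟩
      simpa [smul_smul] using Submodule.smul_mem _ ((φ x)⁻¹ * φ y) (hV.le_Vsub i hw))
  refine ⟨A, ⟨hAQ, fun j y hy => ?_⟩, by simp [hA x hx, hφx]⟩
  rw [hA y (hV.le_Vsub _ hy)]
  simp only [LinearMap.smul_apply, LinearMap.smulRight_apply, smul_smul]
  rcases le_or_gt j.succ i with hji | hij
  · rw [hφ0 y (Submodule.mem_sup_left (hV.strictMono.monotone hji hy)), mul_zero, zero_smul]
    exact Submodule.zero_mem _
  · exact Submodule.smul_mem _ _ (hV.strictMono.monotone (Fin.le_castSucc_iff.2 hij) hw)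

lemma IsFlag.exists_pow_mulVec_ne_zero (i : Fin (k + 1)) {x : Fin n → ℝ} (hx : x ∈ Vsub n)
    (hxi : x ∉ V i) : ∃ P ∈ flagSemigroup V ^ (i : ℕ), P *ᵥ x ≠ 0 := by
  induction i using Fin.induction generalizing x with
  | zero => exact ⟨1, by simp, by simpa [hV.bot] using hxi⟩
  | succ i ih =>
    obtain ⟨w, hw, hwi⟩ := SetLike.exists_of_lt (hV.strictMono i.castSucc_lt_succ)
    obtain ⟨A, hA, rfl⟩ := hV.exists_mulVec_eq i.succ hx hxi hw
    obtain ⟨P, hP, hPA⟩ := ih (hV.le_Vsub _ hw) hwi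
    refine ⟨P * A, ?_, by rwa [← mulVec_mulVec]⟩
    rw [Fin.val_succ, pow_succ]
    exact Set.mul_mem_mul hP hA

lemma IsFlag.exists_pow_mulVec_eq (i : Fin (k + 1)) {v : Fin n → ℝ} (hv : v ∈ V i) :
    ∃ P ∈ flagSemigroup V ^ (k - i), ∃ x ∈ Vsub n, P *ᵥ x = v := by
  induction i using Fin.reverseInduction generalizing v with
  | last => exact ⟨1, by simp, v, hV.last ▸ hv, one_mulVec v⟩
  | cast i ih =>
    obtain ⟨y, hy, hyi⟩ := SetLike.exists_of_lt (hV.strictMono i.castSucc_lt_succ)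
    obtain ⟨A, hA, rfl⟩ := hV.exists_mulVec_eq i.castSucc (hV.le_Vsub _ hy) hyi hv
    obtain ⟨P, hP, x, hx, rfl⟩ := ih hy
    refine ⟨A * P, ?_, x, hx, by rw [mulVec_mulVec]⟩
    rw [show k - i.castSucc = k - i.succ + 1 by simp; omega, pow_succ']
    exact Set.mul_mem_mul hA hP

lemma IsFlag.kerChain_flagSemigroup (i : Fin (k + 1)) :
    kerChain (flagSemigroup V) i = V i := by
  refine le_antisymm (fun x hx => ?_) fun x hx =>
    mem_kerChain.2 ⟨hV.le_Vsub i hx, fun P hP => hV.pow_mulVec_eq_zero i hP hx⟩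
  by_contra hxi
  obtain ⟨P, hP, hPx⟩ := hV.exists_pow_mulVec_ne_zero i (mem_kerChain.1 hx).1 hxi
  exact hPx ((mem_kerChain.1 hx).2 P hP)

lemma IsFlag.pow_flagSemigroup_subset : flagSemigroup V ^ k ⊆ {On n} := fun _ hP =>
  eq_On_of_mulVec_eq_zero (pow_subset_Qset (fun _ hA => hA.1) k hP) fun _ hx =>
    hV.pow_mulVec_eq_zero (Fin.last k) hP (hV.last ▸ hx)

lemma IsFlag.injective (hW : IsFlag n k W) (h : flagSemigroup V = flagSemigroup W) :
    V = W := funext fun i => by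
  rw [← hV.kerChain_flagSemigroup, ← hW.kerChain_flagSemigroup, h]

lemma IsFlag.nilLe (hk : 1 ≤ k) : NilLe (On n) (Qset n) k (flagSemigroup V) := by
  obtain ⟨m, rfl⟩ := Nat.exists_eq_add_of_le' hk
  have hprod := prodEq_succ_iff.2 hV.pow_flagSemigroup_subset
  exact ⟨fun _ hA => hA.1, ⟨hV.isSubsg, m + 1, m.succ_pos, hprod⟩,
    Nat.sInf_le ⟨m.succ_pos, hprod⟩⟩

lemma IsFlag.maximal (hk : 1 ≤ k) : Maximal (NilLe (On n) (Qset n) k) (flagSemigroup V) := by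
  refine ⟨hV.nilLe hk, fun T hT hVT A hA => ⟨hT.1 hA, fun i x hx => ?_⟩⟩
  have hTk : T ^ (↑i.succ + (k - i.succ)) ⊆ {On n} := by
    rw [Nat.add_sub_cancel' i.succ.is_le]; exact pow_subset_On_of_nilLe hT
  -- `V (i + 1) ≤ kerChain T (i + 1)`, and `kerChain T i ≤ kerChain (flagSemigroup V) i = V i`
  obtain ⟨P, hP, y, hy, rfl⟩ := hV.exists_pow_mulVec_eq i.succ hx
  have hPy := mulVec_mem_kerChain_of_mem_pow hT.1 hTk (Set.pow_subset_pow_left hVT hP) hy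
  rw [← hV.kerChain_flagSemigroup i.castSucc]
  exact kerChain_antitone hVT _ (mulVec_mem_kerChain hT.1 hA hPy)

end Flag

section Refinement

variable {T : Set (Matrix (Fin n) (Fin n) ℝ)}

/-- The relation between consecutive members of a flag `V` with `T ⊆ flagSemigroup V`. -/
def flagStepRel (T : Set (Matrix (Fin n) (Fin n) ℝ)) :
    SetRel (Submodule ℝ (Fin n → ℝ)) (Submodule ℝ (Fin n → ℝ)) :=
  {p | p.1 < p.2 ∧ ∀ A ∈ T, ∀ x ∈ p.2, A *ᵥ x ∈ p.1}

lemma exists_relSeries_kerChain (hT : T ⊆ Qset n) (j : ℕ) :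
    ∃ p : RelSeries (flagStepRel T), p.head = ⊥ ∧ p.last = kerChain T j ∧ p.length ≤ j := by
  induction j with
  | zero => exact ⟨RelSeries.singleton _ ⊥, rfl, kerChain_zero.symm, le_rfl⟩
  | succ j ih =>
    obtain ⟨p, hhead, hlast, hlen⟩ := ih
    by_cases heq : kerChain T j = kerChain T (j + 1)
    · exact ⟨p, hhead, hlast.trans heq, by omega⟩
    · have hstep : p.last ~[flagStepRel T] kerChain T (j + 1) := hlast ▸
        ⟨lt_of_le_of_ne (kerChain_mono j.le_succ) heq,
          fun A hA x hx => mulVec_mem_kerChain hT hA hx⟩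
      exact ⟨p.snoc _ hstep, by simp [hhead], by simp, by simp; omega⟩

lemma exists_lt_lt_of_length_lt (p : RelSeries (flagStepRel T))
    (hp : finrank ℝ p.head + p.length < finrank ℝ p.last) :
    ∃ i : Fin p.length, ∃ X, p i.castSucc < X ∧ X < p i.succ := by
  by_contra h
  have key (i : Fin (p.length + 1)) : finrank ℝ (p i) ≤ finrank ℝ p.head + i := by
    induction i using Fin.induction with
    | zero => exact le_rfl
    | succ i ih =>
      have : ¬ finrank ℝ (p i.castSucc) + 1 < finrank ℝ (p i.succ) := fun hlt =>
        h ⟨i, Submodule.exists_lt_lt_of_finrank_add_one_lt (p.step i).1.le hlt⟩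
      simp only [Fin.val_succ, Fin.val_castSucc] at ih ⊢
      omega
  have hlast := key (Fin.last p.length)
  rw [Fin.val_last] at hlast
  exact hlast.not_gt hp

lemma exists_relSeries_length_eq {k : ℕ} (p : RelSeries (flagStepRel T)) (hp : p.head = ⊥)
    (hk : p.length ≤ k) (hkp : k ≤ finrank ℝ p.last) :
    ∃ q : RelSeries (flagStepRel T), q.head = ⊥ ∧ q.last = p.last ∧ q.length = k := by
  obtain ⟨d, rfl⟩ := Nat.exists_eq_add_of_le hk
  clear hk
  induction d generalizing p with
  | zero => exact ⟨p, hp, rfl, rfl⟩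
  | succ d ih =>
    obtain ⟨i, X, hiX, hXi⟩ := exists_lt_lt_of_length_lt p (by rw [hp, finrank_bot]; omega)
    have h₁ : p i.castSucc ~[flagStepRel T] X :=
      ⟨hiX, fun A hA x hx => (p.step i).2 A hA x (hXi.le hx)⟩
    have h₂ : X ~[flagStepRel T] p i.succ :=
      ⟨hXi, fun A hA x hx => hiX.le ((p.step i).2 A hA x hx)⟩
    obtain ⟨q, hq⟩ := ih (p.insertNth i X h₁ h₂) (by rw [p.head_insertNth, hp])
      (by rw [p.last_insertNth, RelSeries.insertNth_length]; omega)
    exact ⟨q, hq.1, hq.2.1.trans (p.last_insertNth ..),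
      by rw [hq.2.2, RelSeries.insertNth_length]; omega⟩

lemma exists_isFlag_subset_flagSemigroup {k : ℕ} (hT : T ⊆ Qset n) (hTk : T ^ k ⊆ {On n})
    (hk : k ≤ finrank ℝ (Vsub n)) : ∃ V, IsFlag n k V ∧ T ⊆ flagSemigroup V := by
  obtain ⟨p, hp, hplast, hplen⟩ := exists_relSeries_kerChain hT k
  rw [kerChain_eq_Vsub hTk] at hplast
  obtain ⟨⟨len, V, hV⟩, hhead, hlast, rfl⟩ :=
    exists_relSeries_length_eq p hp hplen (hplast ▸ hk)
  exact ⟨V, ⟨hhead, hlast.trans hplast, Fin.strictMono_iff_lt_succ.2 fun i => (hV i).1⟩,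
    fun A hA => ⟨hT hA, fun i x hx => (hV i).2 A hA x hx⟩⟩

end Refinement

theorem stmt13_general (n k : ℕ) (hk1 : 1 ≤ k) (hkn : k ≤ n - 1) :
    Set.BijOn
      (fun V : Fin (k + 1) → Submodule ℝ (Fin n → ℝ) =>
        {A | A ∈ Qset n ∧ ∀ i : Fin k, ∀ x ∈ V i.succ, A.mulVec x ∈ V i.castSucc})
      {V | V 0 = ⊥ ∧ V (Fin.last k) = Vsub n ∧ StrictMono V}
      {T | Maximal (NilLe (On n) (Qset n) k) T} := by
  refine ⟨fun V hV => IsFlag.maximal ⟨hV.1, hV.2.1, hV.2.2⟩ hk1,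
    fun V hV W hW h => IsFlag.injective ⟨hV.1, hV.2.1, hV.2.2⟩ ⟨hW.1, hW.2.1, hW.2.2⟩ h,
    fun T hT => ?_⟩
  have hkV : k ≤ finrank ℝ (Vsub n) := by
    have := finrank_Vsub_add_one (n := n) (by omega)
    omega
  obtain ⟨V, hV, hTV⟩ :=
    exists_isFlag_subset_flagSemigroup hT.1.1 (pow_subset_On_of_nilLe hT.1) hkV
  exact ⟨V, ⟨hV.bot, hV.last, hV.strictMono⟩, (hT.2 (hV.nilLe hk1) hTV).antisymm hTV⟩

/-- The map sending a flag `0 = V_0 ⊊ V_1 ⊊ ⋯ ⊊ V_k = V` of length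
`k` in the hyperplane `V` of sum-zero vectors to
`T = {A ∈ Q_n : A·V_i ⊆ V_{i-1} for all i}` is a bijection from the set of flags of
length `k` in `V` onto the set of maximal elements of `Nil_k(Q_n)`. -/
theorem stmt13 (n k : ℕ) (hn : 2 ≤ n) (hk1 : 1 ≤ k) (hkn : k ≤ n - 1) :
    Set.BijOn
      (fun V : Fin (k + 1) → Submodule ℝ (Fin n → ℝ) =>
        {A | A ∈ Qset n ∧ ∀ i : Fin k, ∀ x ∈ V i.succ, A.mulVec x ∈ V i.castSucc})
      {V | V 0 = ⊥ ∧ V (Fin.last k) = Vsub n ∧ StrictMono V}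
      {T | Maximal (NilLe (On n) (Qset n) k) T} :=
  stmt13_general n k hk1 hkn

end NilSg
end
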